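/- arXiv:2004.01070 — 3 statements merged into one kernel-verified Lean document; each statement's English description precedes it below -/
import Mathlib

section
/- Let (u,n,v) be a classical solution of the reduced Zakharov system (ZSb) and let φ ∈ C^∞(ℝ) be a real function which is bounded together with its first derivative. Then for every t: d/dt ∫_ℝ φ(x) ( |u(t,x)|² + v(t,x)² + n(t,x)² ) dx = −2 Im ∫_ℝ φ'(x) u(t,x) conj(∂ₓu(t,x)) dx + 2∫_ℝ φ'(x) v(t,x) n(t,x) dx − 4 Re ∫_ℝ φ(x) v(t,x) u(t,x) conj(∂ₓu(t,x)) dx. -/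
open MeasureTheory Filter Real Set

noncomputable section

/-- Partial derivative in the space variable `x` (complex-valued). -/
def pdC (f : ℝ → ℝ → ℂ) : ℝ → ℝ → ℂ := fun t x => deriv (fun y => f t y) x

/-- Partial derivative in the time variable `t` (complex-valued). -/
def pdtC (f : ℝ → ℝ → ℂ) : ℝ → ℝ → ℂ := fun t x => deriv (fun s => f s x) t

/-- Partial derivative in the space variable `x` (real-valued). -/
def pdR (f : ℝ → ℝ → ℝ) : ℝ → ℝ → ℝ := fun t x => deriv (fun y => f t y) x

/-- Partial derivative in the time variable `t` (real-valued). -/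
def pdtR (f : ℝ → ℝ → ℝ) : ℝ → ℝ → ℝ := fun t x => deriv (fun s => f s x) t

/-- `f` and all its derivatives are Schwartz in `x`, locally uniformly in `t`. -/
def SchwartzLocC (f : ℝ → ℝ → ℂ) : Prop :=
  ∀ j k l : ℕ, ∀ T : ℝ, ∃ C : ℝ, ∀ t x : ℝ, |t| ≤ T →
    |x| ^ k * ‖pdC^[l] (pdtC^[j] f) t x‖ ≤ C

/-- `f` and all its derivatives are Schwartz in `x`, locally uniformly in `t`. -/
def SchwartzLocR (f : ℝ → ℝ → ℝ) : Prop :=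
  ∀ j k l : ℕ, ∀ T : ℝ, ∃ C : ℝ, ∀ t x : ℝ, |t| ≤ T →
    |x| ^ k * |pdR^[l] (pdtR^[j] f) t x| ≤ C

/-- Classical solution of the reduced Zakharov system (ZSb):
`i uₜ + u_xx = n u`, `nₜ + v_x = 0`, `vₜ + (n + |u|²)_x = 0`. -/
structure IsZakharovSolution (u : ℝ → ℝ → ℂ) (n v : ℝ → ℝ → ℝ) : Prop where
  smooth_u : ContDiff ℝ (⊤ : ℕ∞) fun p : ℝ × ℝ => u p.1 p.2
  smooth_n : ContDiff ℝ (⊤ : ℕ∞) fun p : ℝ × ℝ => n p.1 p.2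
  smooth_v : ContDiff ℝ (⊤ : ℕ∞) fun p : ℝ × ℝ => v p.1 p.2
  schwartz_u : SchwartzLocC u
  schwartz_n : SchwartzLocR n
  schwartz_v : SchwartzLocR v
  eq_u : ∀ t x : ℝ, Complex.I * pdtC u t x + pdC (pdC u) t x = (n t x : ℂ) * u t x
  eq_n : ∀ t x : ℝ, pdtR n t x + pdR v t x = 0
  eq_v : ∀ t x : ℝ, pdtR v t x + pdR (fun s y => n s y + ‖u s y‖ ^ 2) t x = 0



variable {E : Type*} [NormedAddCommGroup E] [NormedSpace ℝ E]

lemma hasDerivAt_unc_snd {f : ℝ → ℝ → E} (hf : ContDiff ℝ (⊤ : ℕ∞) fun p : ℝ × ℝ => f p.1 p.2)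
    (t x : ℝ) :
    HasDerivAt (fun y => f t y) (fderiv ℝ (fun p : ℝ × ℝ => f p.1 p.2) (t, x) (0, 1)) x := by
  have h := (hf.differentiable (by simp) (t, x)).hasFDerivAt
  exact h.comp_hasDerivAt x ((hasDerivAt_const x t).prodMk (hasDerivAt_id x))

lemma hasDerivAt_unc_fst {f : ℝ → ℝ → E} (hf : ContDiff ℝ (⊤ : ℕ∞) fun p : ℝ × ℝ => f p.1 p.2)
    (t x : ℝ) :
    HasDerivAt (fun s => f s x) (fderiv ℝ (fun p : ℝ × ℝ => f p.1 p.2) (t, x) (1, 0)) t := by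
  have h := (hf.differentiable (by simp) (t, x)).hasFDerivAt
  exact h.comp_hasDerivAt t ((hasDerivAt_id t).prodMk (hasDerivAt_const t x))

lemma contDiff_fderiv_apply {F : ℝ × ℝ → E} (hf : ContDiff ℝ (⊤ : ℕ∞) F) (w : ℝ × ℝ) :
    ContDiff ℝ (⊤ : ℕ∞) fun p => fderiv ℝ F p w :=
  (hf.fderiv_right (m := (⊤ : ℕ∞)) (by simp)).clm_apply contDiff_const

lemma contDiff_pd {f : ℝ → ℝ → E} (hf : ContDiff ℝ (⊤ : ℕ∞) fun p : ℝ × ℝ => f p.1 p.2) :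
    ContDiff ℝ (⊤ : ℕ∞) fun p : ℝ × ℝ => deriv (fun y => f p.1 y) p.2 := by
  have h := contDiff_fderiv_apply hf (0, 1)
  have e : (fun p : ℝ × ℝ => deriv (fun y => f p.1 y) p.2)
      = fun p => fderiv ℝ (fun p : ℝ × ℝ => f p.1 p.2) p (0, 1) :=
    funext fun p => (hasDerivAt_unc_snd hf p.1 p.2).deriv
  rw [e]; exact h

lemma contDiff_pdt {f : ℝ → ℝ → E} (hf : ContDiff ℝ (⊤ : ℕ∞) fun p : ℝ × ℝ => f p.1 p.2) :
    ContDiff ℝ (⊤ : ℕ∞) fun p : ℝ × ℝ => deriv (fun s => f s p.2) p.1 := by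
  have h := contDiff_fderiv_apply hf (1, 0)
  have e : (fun p : ℝ × ℝ => deriv (fun s => f s p.2) p.1)
      = fun p => fderiv ℝ (fun p : ℝ × ℝ => f p.1 p.2) p (1, 0) :=
    funext fun p => (hasDerivAt_unc_fst hf p.1 p.2).deriv
  rw [e]; exact h

lemma hasDerivAt_pd {f : ℝ → ℝ → E} (hf : ContDiff ℝ (⊤ : ℕ∞) fun p : ℝ × ℝ => f p.1 p.2)
    (t x : ℝ) : HasDerivAt (fun y => f t y) (deriv (fun y => f t y) x) x :=
  (hasDerivAt_unc_snd hf t x).deriv ▸ hasDerivAt_unc_snd hf t x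

lemma hasDerivAt_pdt {f : ℝ → ℝ → E} (hf : ContDiff ℝ (⊤ : ℕ∞) fun p : ℝ × ℝ => f p.1 p.2)
    (t x : ℝ) : HasDerivAt (fun s => f s x) (deriv (fun s => f s x) t) t :=
  (hasDerivAt_unc_fst hf t x).deriv ▸ hasDerivAt_unc_fst hf t x

lemma integrable_of_decay {f : ℝ → E} (hc : Continuous f) (C : ℝ)
    (h : ∀ x, (1 + x ^ 2) * ‖f x‖ ≤ C) : Integrable f := by
  refine (integrable_inv_one_add_sq.const_mul C).mono' hc.aestronglyMeasurable ?_
  filter_upwards with x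
  have h1 : (0 : ℝ) < 1 + x ^ 2 := by positivity
  have := h x
  rw [inv_eq_one_div, mul_one_div, le_div_iff₀ h1]
  linarith



lemma hasDerivAt_conj' {f : ℝ → ℂ} {d : ℂ} {x : ℝ} (h : HasDerivAt f d x) :
    HasDerivAt (fun y => (starRingEnd ℂ) (f y)) ((starRingEnd ℂ) d) x := by
  simpa [Function.comp_def] using ((Complex.conjCLE.toContinuousLinearMap.hasFDerivAt).comp_hasDerivAt x h)

lemma hasDerivAt_ofReal' {f : ℝ → ℝ} {d : ℝ} {x : ℝ} (h : HasDerivAt f d x) :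
    HasDerivAt (fun y => (f y : ℂ)) (d : ℂ) x := by
  simpa [Function.comp_def] using (Complex.ofRealCLM.hasFDerivAt.comp_hasDerivAt x h)

lemma hasDerivAt_re' {f : ℝ → ℂ} {d : ℂ} {x : ℝ} (h : HasDerivAt f d x) :
    HasDerivAt (fun y => (f y).re) d.re x := by
  simpa [Function.comp_def] using (Complex.reCLM.hasFDerivAt.comp_hasDerivAt x h)

lemma mul_conj_re' (z : ℂ) : (z * (starRingEnd ℂ) z).re = ‖z‖ ^ 2 := by
  rw [Complex.mul_conj]
  norm_cast
  rw [Complex.normSq_eq_norm_sq]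

lemma key_alg (a b c d : ℂ) (r : ℝ) (h : Complex.I * b + c = (r : ℂ) * a) :
    (b * (starRingEnd ℂ) a + a * (starRingEnd ℂ) b).re
      = 2 * (d * (starRingEnd ℂ) d + a * (starRingEnd ℂ) c).im := by
  have hb : b = -Complex.I * ((r : ℂ) * a - c) := by
    linear_combination (-Complex.I) * h + b * Complex.I_sq
  subst hb
  simp only [map_mul, map_sub, map_neg, Complex.conj_I, Complex.conj_ofReal]
  simp [Complex.add_re, Complex.add_im, Complex.mul_re, Complex.mul_im, Complex.sub_re,
    Complex.sub_im, Complex.neg_re, Complex.neg_im, Complex.conj_re, Complex.conj_im,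
    Complex.I_re, Complex.I_im, Complex.ofReal_re, Complex.ofReal_im]
  ring

lemma decay_mul2 {x b c B C : ℝ} (hb0 : 0 ≤ b) (hc0 : 0 ≤ c)
    (hb : b ≤ B) (hc : (1 + x ^ 2) * c ≤ C) : (1 + x ^ 2) * (b * c) ≤ B * C := by
  have hx : (0:ℝ) < 1 + x ^ 2 := by positivity
  have hC0 : 0 ≤ C := le_trans (by positivity) hc
  have hB0 : 0 ≤ B := le_trans hb0 hb
  calc (1 + x ^ 2) * (b * c) = b * ((1 + x ^ 2) * c) := by ring
    _ ≤ B * C := mul_le_mul hb hc (by positivity) hB0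

lemma decay_mul3 {x a b c A B C : ℝ} (ha0 : 0 ≤ a) (hb0 : 0 ≤ b) (hc0 : 0 ≤ c)
    (ha : a ≤ A) (hb : b ≤ B) (hc : (1 + x ^ 2) * c ≤ C) :
    (1 + x ^ 2) * (a * (b * c)) ≤ A * (B * C) := by
  have hA0 : 0 ≤ A := le_trans ha0 ha
  calc (1 + x ^ 2) * (a * (b * c)) = a * ((1 + x ^ 2) * (b * c)) := by ring
    _ ≤ A * (B * C) := mul_le_mul ha (decay_mul2 hb0 hc0 hb hc) (by positivity) hA0

lemma sup_of_decay {x c C : ℝ} (hc0 : 0 ≤ c) (hc : (1 + x ^ 2) * c ≤ C) : c ≤ C := by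
  nlinarith [sq_nonneg x]

lemma decay_add2 {x a b A B : ℝ} (ha : (1 + x ^ 2) * a ≤ A) (hb : (1 + x ^ 2) * b ≤ B) :
    (1 + x ^ 2) * (a + b) ≤ A + B := by
  calc (1 + x ^ 2) * (a + b) = (1 + x ^ 2) * a + (1 + x ^ 2) * b := by ring
    _ ≤ A + B := add_le_add ha hb

lemma le_of_decay_pt {g K x : ℝ} (hg : 0 ≤ g) (h : (1 + x ^ 2) * g ≤ K) :
    g ≤ K * (1 + x ^ 2)⁻¹ := by
  have hx : (0:ℝ) < 1 + x ^ 2 := by positivity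
  rw [inv_eq_one_div, mul_one_div, le_div_iff₀ hx]
  linarith

lemma norm_two_mul_conj (a b : ℂ) :
    |(b * (starRingEnd ℂ) a + a * (starRingEnd ℂ) b).re| ≤ 2 * (‖a‖ * ‖b‖) := by
  calc |(b * (starRingEnd ℂ) a + a * (starRingEnd ℂ) b).re|
      ≤ ‖b * (starRingEnd ℂ) a + a * (starRingEnd ℂ) b‖ := Complex.abs_re_le_norm _
    _ ≤ ‖b * (starRingEnd ℂ) a‖ + ‖a * (starRingEnd ℂ) b‖ := norm_add_le _ _
    _ = 2 * (‖a‖ * ‖b‖) := by rw [norm_mul, norm_mul, RCLike.norm_conj, RCLike.norm_conj]; ring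

lemma schwartzC_decay {f : ℝ → ℝ → ℂ} (h : SchwartzLocC f) (j l : ℕ) (T : ℝ) :
    ∃ C : ℝ, ∀ t x : ℝ, |t| ≤ T → (1 + x ^ 2) * ‖pdC^[l] (pdtC^[j] f) t x‖ ≤ C := by
  obtain ⟨C0, h0⟩ := h j 0 l T
  obtain ⟨C2, h2⟩ := h j 2 l T
  refine ⟨C0 + C2, fun t x ht => ?_⟩
  have e0 := h0 t x ht
  have e2 := h2 t x ht
  rw [sq_abs] at e2
  simp only [pow_zero, one_mul] at e0
  nlinarith [norm_nonneg (pdC^[l] (pdtC^[j] f) t x)]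

lemma schwartzR_decay {f : ℝ → ℝ → ℝ} (h : SchwartzLocR f) (j l : ℕ) (T : ℝ) :
    ∃ C : ℝ, ∀ t x : ℝ, |t| ≤ T → (1 + x ^ 2) * |pdR^[l] (pdtR^[j] f) t x| ≤ C := by
  obtain ⟨C0, h0⟩ := h j 0 l T
  obtain ⟨C2, h2⟩ := h j 2 l T
  refine ⟨C0 + C2, fun t x ht => ?_⟩
  have e0 := h0 t x ht
  have e2 := h2 t x ht
  rw [sq_abs] at e2
  simp only [pow_zero, one_mul] at e0
  nlinarith [abs_nonneg (pdR^[l] (pdtR^[j] f) t x)]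

set_option maxHeartbeats 2000000 in
/-- identity for the localized mass-type quantity of the Zakharov
system: `d/dt ∫ φ(|u|² + v² + n²) = −2Im∫φ'u∂ₓū + 2∫φ'vn − 4Re∫φ v u ∂ₓū`. -/
theorem zakharov_localized_mass_identity
    (u : ℝ → ℝ → ℂ) (n v : ℝ → ℝ → ℝ)
    (hsol : IsZakharovSolution u n v)
    (φ : ℝ → ℝ) (hφ : ContDiff ℝ (⊤ : ℕ∞) φ)
    (hφbdd : ∀ k ≤ 1, ∃ C : ℝ, ∀ x : ℝ, |iteratedDeriv k φ x| ≤ C) :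
    ∀ t : ℝ, HasDerivAt
      (fun s => ∫ x : ℝ, φ x * (‖u s x‖ ^ 2 + (v s x) ^ 2 + (n s x) ^ 2))
      (-2 * (∫ x : ℝ, Complex.ofReal (deriv φ x)
            * (u t x * (starRingEnd ℂ) (pdC u t x))).im
        + 2 * (∫ x : ℝ, deriv φ x * (v t x * n t x))
        - 4 * (∫ x : ℝ, Complex.ofReal (φ x * v t x)
            * (u t x * (starRingEnd ℂ) (pdC u t x))).re) t := by
  obtain ⟨hsm_u, hsm_n, hsm_v, hsw_u, hsw_n, hsw_v, heq_u, heq_n, heq_v⟩ := hsol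
  intro t
  set T : ℝ := |t| + 1 with hTdef
  have hTt : |t| ≤ T := by rw [hTdef]; linarith
  obtain ⟨Cφ, hCφ⟩ := hφbdd 0 (by norm_num)
  obtain ⟨Cφ', hCφ'⟩ := hφbdd 1 le_rfl
  simp only [iteratedDeriv_zero] at hCφ
  simp only [iteratedDeriv_one] at hCφ'
  have hCφ0 : 0 ≤ Cφ := le_trans (abs_nonneg _) (hCφ 0)
  have hCφ'0 : 0 ≤ Cφ' := le_trans (abs_nonneg _) (hCφ' 0)
  have hφc : Continuous φ := hφ.continuous
  have hφ'c : Continuous (deriv φ) := hφ.continuous_deriv (by simp)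
  have hφd : ∀ x : ℝ, HasDerivAt φ (deriv φ x) x := fun x =>
    (hφ.differentiable (by simp) x).hasDerivAt
  -- smoothness of derived quantities
  have hUx : ContDiff ℝ (⊤ : ℕ∞) fun p : ℝ × ℝ => pdC u p.1 p.2 := by
    simpa only [pdC] using contDiff_pd hsm_u
  have hUxx : ContDiff ℝ (⊤ : ℕ∞) fun p : ℝ × ℝ => pdC (pdC u) p.1 p.2 := by
    simpa only [pdC] using contDiff_pd hUx
  have hUt : ContDiff ℝ (⊤ : ℕ∞) fun p : ℝ × ℝ => pdtC u p.1 p.2 := by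
    simpa only [pdtC] using contDiff_pdt hsm_u
  have hNx : ContDiff ℝ (⊤ : ℕ∞) fun p : ℝ × ℝ => pdR n p.1 p.2 := by
    simpa only [pdR] using contDiff_pd hsm_n
  have hNt : ContDiff ℝ (⊤ : ℕ∞) fun p : ℝ × ℝ => pdtR n p.1 p.2 := by
    simpa only [pdtR] using contDiff_pdt hsm_n
  have hVx : ContDiff ℝ (⊤ : ℕ∞) fun p : ℝ × ℝ => pdR v p.1 p.2 := by
    simpa only [pdR] using contDiff_pd hsm_v
  have hVt : ContDiff ℝ (⊤ : ℕ∞) fun p : ℝ × ℝ => pdtR v p.1 p.2 := by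
    simpa only [pdtR] using contDiff_pdt hsm_v
  -- continuity in x at fixed time s
  have cmk : ∀ s : ℝ, Continuous fun x : ℝ => ((s, x) : ℝ × ℝ) := fun s => Continuous.prodMk_right s
  have hc_u : ∀ s, Continuous fun x => u s x := fun s => hsm_u.continuous.comp (cmk s)
  have hc_ux : ∀ s, Continuous fun x => pdC u s x := fun s => hUx.continuous.comp (cmk s)
  have hc_uxx : ∀ s, Continuous fun x => pdC (pdC u) s x := fun s => hUxx.continuous.comp (cmk s)
  have hc_ut : ∀ s, Continuous fun x => pdtC u s x := fun s => hUt.continuous.comp (cmk s)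
  have hc_n : ∀ s, Continuous fun x => n s x := fun s => hsm_n.continuous.comp (cmk s)
  have hc_v : ∀ s, Continuous fun x => v s x := fun s => hsm_v.continuous.comp (cmk s)
  have hc_nx : ∀ s, Continuous fun x => pdR n s x := fun s => hNx.continuous.comp (cmk s)
  have hc_vx : ∀ s, Continuous fun x => pdR v s x := fun s => hVx.continuous.comp (cmk s)
  have hc_nt : ∀ s, Continuous fun x => pdtR n s x := fun s => hNt.continuous.comp (cmk s)
  have hc_vt : ∀ s, Continuous fun x => pdtR v s x := fun s => hVt.continuous.comp (cmk s)
  have hc_conj : ∀ {g : ℝ → ℂ}, Continuous g → Continuous fun x => (starRingEnd ℂ) (g x) :=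
    fun hg => by simpa [Function.comp_def] using Complex.conjCLE.continuous.comp hg
  -- pointwise derivatives
  have hdx_u : ∀ s x, HasDerivAt (fun y => u s y) (pdC u s x) x := fun s x => by
    simpa only [pdC] using hasDerivAt_pd hsm_u s x
  have hdx_ux : ∀ s x, HasDerivAt (fun y => pdC u s y) (pdC (pdC u) s x) x := fun s x => by
    simpa only [pdC] using hasDerivAt_pd hUx s x
  have hdx_n : ∀ s x, HasDerivAt (fun y => n s y) (pdR n s x) x := fun s x => by
    simpa only [pdR] using hasDerivAt_pd hsm_n s x
  have hdx_v : ∀ s x, HasDerivAt (fun y => v s y) (pdR v s x) x := fun s x => by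
    simpa only [pdR] using hasDerivAt_pd hsm_v s x
  have hdt_u : ∀ s x, HasDerivAt (fun r => u r x) (pdtC u s x) s := fun s x => by
    simpa only [pdtC] using hasDerivAt_pdt hsm_u s x
  have hdt_n : ∀ s x, HasDerivAt (fun r => n r x) (pdtR n s x) s := fun s x => by
    simpa only [pdtR] using hasDerivAt_pdt hsm_n s x
  have hdt_v : ∀ s x, HasDerivAt (fun r => v r x) (pdtR v s x) s := fun s x => by
    simpa only [pdtR] using hasDerivAt_pdt hsm_v s x
  -- decay constants
  obtain ⟨Du, hDu⟩ : ∃ C, ∀ s x : ℝ, |s| ≤ T → (1 + x ^ 2) * ‖u s x‖ ≤ C := by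
    simpa using schwartzC_decay hsw_u 0 0 T
  obtain ⟨Dut, hDut⟩ : ∃ C, ∀ s x : ℝ, |s| ≤ T → (1 + x ^ 2) * ‖pdtC u s x‖ ≤ C := by
    simpa using schwartzC_decay hsw_u 1 0 T
  obtain ⟨Dux, hDux⟩ : ∃ C, ∀ s x : ℝ, |s| ≤ T → (1 + x ^ 2) * ‖pdC u s x‖ ≤ C := by
    simpa using schwartzC_decay hsw_u 0 1 T
  obtain ⟨Duxx, hDuxx⟩ : ∃ C, ∀ s x : ℝ, |s| ≤ T → (1 + x ^ 2) * ‖pdC (pdC u) s x‖ ≤ C := by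
    have h := schwartzC_decay hsw_u 0 2 T
    simpa [show (2:ℕ) = 1 + 1 from rfl, Function.iterate_succ_apply', Function.iterate_one] using h
  obtain ⟨Dn, hDn⟩ : ∃ C, ∀ s x : ℝ, |s| ≤ T → (1 + x ^ 2) * |n s x| ≤ C := by
    simpa using schwartzR_decay hsw_n 0 0 T
  obtain ⟨Dnt, hDnt⟩ : ∃ C, ∀ s x : ℝ, |s| ≤ T → (1 + x ^ 2) * |pdtR n s x| ≤ C := by
    simpa using schwartzR_decay hsw_n 1 0 T
  obtain ⟨Dnx, hDnx⟩ : ∃ C, ∀ s x : ℝ, |s| ≤ T → (1 + x ^ 2) * |pdR n s x| ≤ C := by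
    simpa using schwartzR_decay hsw_n 0 1 T
  obtain ⟨Dv, hDv⟩ : ∃ C, ∀ s x : ℝ, |s| ≤ T → (1 + x ^ 2) * |v s x| ≤ C := by
    simpa using schwartzR_decay hsw_v 0 0 T
  obtain ⟨Dvt, hDvt⟩ : ∃ C, ∀ s x : ℝ, |s| ≤ T → (1 + x ^ 2) * |pdtR v s x| ≤ C := by
    simpa using schwartzR_decay hsw_v 1 0 T
  obtain ⟨Dvx, hDvx⟩ : ∃ C, ∀ s x : ℝ, |s| ≤ T → (1 + x ^ 2) * |pdR v s x| ≤ C := by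
    simpa using schwartzR_decay hsw_v 0 1 T
  have hDv0 : (0:ℝ) ≤ Dv := le_trans (by positivity) (hDv t 0 hTt)
  have sDu : ∀ s x : ℝ, |s| ≤ T → ‖u s x‖ ≤ Du := fun s x h =>
    sup_of_decay (norm_nonneg _) (hDu s x h)
  have sDux : ∀ s x : ℝ, |s| ≤ T → ‖pdC u s x‖ ≤ Dux := fun s x h =>
    sup_of_decay (norm_nonneg _) (hDux s x h)
  have sDn : ∀ s x : ℝ, |s| ≤ T → |n s x| ≤ Dn := fun s x h =>
    sup_of_decay (abs_nonneg _) (hDn s x h)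
  have sDv : ∀ s x : ℝ, |s| ≤ T → |v s x| ≤ Dv := fun s x h =>
    sup_of_decay (abs_nonneg _) (hDv s x h)
  -- the time derivative of the integrand
  set G : ℝ → ℝ → ℝ := fun s x => φ x *
      ((pdtC u s x * (starRingEnd ℂ) (u s x) + u s x * (starRingEnd ℂ) (pdtC u s x)).re
        + (pdtR v s x * v s x + v s x * pdtR v s x)
        + (pdtR n s x * n s x + n s x * pdtR n s x)) with hGdef
  have hGderiv : ∀ s x : ℝ,
      HasDerivAt (fun r => φ x * (‖u r x‖ ^ 2 + v r x ^ 2 + n r x ^ 2)) (G s x) s := by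
    intro s x
    have h4 := hasDerivAt_re' ((hdt_u s x).mul (hasDerivAt_conj' (hdt_u s x)))
    have h4' : HasDerivAt (fun r => ‖u r x‖ ^ 2)
        ((pdtC u s x * (starRingEnd ℂ) (u s x)
          + u s x * (starRingEnd ℂ) (pdtC u s x)).re) s := by
      refine h4.congr_of_eventuallyEq (Filter.Eventually.of_forall fun r => ?_)
      exact (mul_conj_re' (u r x)).symm
    have h5 : HasDerivAt (fun r => v r x ^ 2)
        (pdtR v s x * v s x + v s x * pdtR v s x) s := by
      simpa only [pow_two, Pi.mul_def] using (hdt_v s x).mul (hdt_v s x)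
    have h6 : HasDerivAt (fun r => n r x ^ 2)
        (pdtR n s x * n s x + n s x * pdtR n s x) s := by
      simpa only [pow_two, Pi.mul_def] using (hdt_n s x).mul (hdt_n s x)
    exact ((h4'.add h5).add h6).const_mul (φ x)
  -- uniform bound on G near t
  set K : ℝ := Cφ * (2 * (Du * Dut) + (2 * (Dv * Dvt) + 2 * (Dn * Dnt))) with hKdef
  have hGbound : ∀ x : ℝ, ∀ s ∈ Metric.ball t 1, ‖G s x‖ ≤ K * (1 + x ^ 2)⁻¹ := by
    intro x s hs
    have hsT : |s| ≤ T := by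
      have h := Metric.mem_ball.mp hs
      rw [Real.dist_eq] at h
      rw [hTdef]
      have h2 : |s| ≤ |s - t| + |t| := by
        calc |s| = |(s - t) + t| := by ring_nf
          _ ≤ |s - t| + |t| := abs_add_le _ _
      linarith
    have e1 := norm_two_mul_conj (u s x) (pdtC u s x)
    have e2 : |pdtR v s x * v s x + v s x * pdtR v s x| ≤ 2 * (|v s x| * |pdtR v s x|) := by
      calc |pdtR v s x * v s x + v s x * pdtR v s x|
          ≤ |pdtR v s x * v s x| + |v s x * pdtR v s x| := abs_add_le _ _
        _ = 2 * (|v s x| * |pdtR v s x|) := by rw [abs_mul, abs_mul]; ring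
    have e3 : |pdtR n s x * n s x + n s x * pdtR n s x| ≤ 2 * (|n s x| * |pdtR n s x|) := by
      calc |pdtR n s x * n s x + n s x * pdtR n s x|
          ≤ |pdtR n s x * n s x| + |n s x * pdtR n s x| := abs_add_le _ _
        _ = 2 * (|n s x| * |pdtR n s x|) := by rw [abs_mul, abs_mul]; ring
    refine le_of_decay_pt (norm_nonneg _) ?_
    have hnorm : ‖G s x‖ ≤ |φ x| * (2 * (‖u s x‖ * ‖pdtC u s x‖)
        + (2 * (|v s x| * |pdtR v s x|) + 2 * (|n s x| * |pdtR n s x|))) := by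
      rw [hGdef]
      simp only [Real.norm_eq_abs, abs_mul]
      refine mul_le_mul_of_nonneg_left ?_ (abs_nonneg _)
      calc |(pdtC u s x * (starRingEnd ℂ) (u s x) + u s x * (starRingEnd ℂ) (pdtC u s x)).re
            + (pdtR v s x * v s x + v s x * pdtR v s x)
            + (pdtR n s x * n s x + n s x * pdtR n s x)|
          ≤ |(pdtC u s x * (starRingEnd ℂ) (u s x) + u s x * (starRingEnd ℂ) (pdtC u s x)).re|
            + |pdtR v s x * v s x + v s x * pdtR v s x|
            + |pdtR n s x * n s x + n s x * pdtR n s x| := abs_add_three _ _ _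
        _ ≤ _ := by linarith
    have hdec : (1 + x ^ 2) * (2 * (‖u s x‖ * ‖pdtC u s x‖)
        + (2 * (|v s x| * |pdtR v s x|) + 2 * (|n s x| * |pdtR n s x|)))
        ≤ 2 * (Du * Dut) + (2 * (Dv * Dvt) + 2 * (Dn * Dnt)) := by
      have p1 : (1 + x ^ 2) * (2 * (‖u s x‖ * ‖pdtC u s x‖)) ≤ 2 * (Du * Dut) := by
        have := decay_mul2 (norm_nonneg (u s x)) (norm_nonneg (pdtC u s x))
          (sDu s x hsT) (hDut s x hsT)
        nlinarith [this]
      have p2 : (1 + x ^ 2) * (2 * (|v s x| * |pdtR v s x|)) ≤ 2 * (Dv * Dvt) := by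
        have := decay_mul2 (abs_nonneg (v s x)) (abs_nonneg (pdtR v s x))
          (sDv s x hsT) (hDvt s x hsT)
        nlinarith [this]
      have p3 : (1 + x ^ 2) * (2 * (|n s x| * |pdtR n s x|)) ≤ 2 * (Dn * Dnt) := by
        have := decay_mul2 (abs_nonneg (n s x)) (abs_nonneg (pdtR n s x))
          (sDn s x hsT) (hDnt s x hsT)
        nlinarith [this]
      exact decay_add2 p1 (decay_add2 p2 p3)
    calc (1 + x ^ 2) * ‖G s x‖
        ≤ (1 + x ^ 2) * (|φ x| * (2 * (‖u s x‖ * ‖pdtC u s x‖)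
            + (2 * (|v s x| * |pdtR v s x|) + 2 * (|n s x| * |pdtR n s x|)))) :=
          mul_le_mul_of_nonneg_left hnorm (by positivity)
      _ = |φ x| * ((1 + x ^ 2) * (2 * (‖u s x‖ * ‖pdtC u s x‖)
            + (2 * (|v s x| * |pdtR v s x|) + 2 * (|n s x| * |pdtR n s x|)))) := by ring
      _ ≤ K := by
          rw [hKdef]
          exact mul_le_mul (hCφ x) hdec (by positivity) hCφ0
  -- integrability of the integrand at time t
  have hFint : Integrable (fun x => φ x * (‖u t x‖ ^ 2 + v t x ^ 2 + n t x ^ 2)) := by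
    refine integrable_of_decay
      (hφc.mul ((((hc_u t).norm.pow 2).add ((hc_v t).pow 2)).add ((hc_n t).pow 2)))
      (Cφ * (Du * Du + (Dv * Dv + Dn * Dn))) fun x => ?_
    have hnorm : ‖φ x * (‖u t x‖ ^ 2 + v t x ^ 2 + n t x ^ 2)‖
        = |φ x| * (‖u t x‖ * ‖u t x‖ + (|v t x| * |v t x| + |n t x| * |n t x|)) := by
      rw [Real.norm_eq_abs, abs_mul, abs_of_nonneg (show (0:ℝ) ≤ ‖u t x‖ ^ 2 + v t x ^ 2
        + n t x ^ 2 from by positivity)]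
      have e1 : |v t x| * |v t x| = v t x ^ 2 := by rw [abs_mul_abs_self, ← pow_two]
      have e2 : |n t x| * |n t x| = n t x ^ 2 := by rw [abs_mul_abs_self, ← pow_two]
      rw [e1, e2]; ring
    rw [hnorm]
    have hdec : (1 + x ^ 2) * (‖u t x‖ * ‖u t x‖ + (|v t x| * |v t x| + |n t x| * |n t x|))
        ≤ Du * Du + (Dv * Dv + Dn * Dn) :=
      decay_add2 (decay_mul2 (norm_nonneg _) (norm_nonneg _) (sDu t x hTt) (hDu t x hTt))
        (decay_add2 (decay_mul2 (abs_nonneg _) (abs_nonneg _) (sDv t x hTt) (hDv t x hTt))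
          (decay_mul2 (abs_nonneg _) (abs_nonneg _) (sDn t x hTt) (hDn t x hTt)))
    calc (1 + x ^ 2) * (|φ x| * (‖u t x‖ * ‖u t x‖ + (|v t x| * |v t x| + |n t x| * |n t x|)))
        = |φ x| * ((1 + x ^ 2) * (‖u t x‖ * ‖u t x‖
            + (|v t x| * |v t x| + |n t x| * |n t x|))) := by ring
      _ ≤ Cφ * (Du * Du + (Dv * Dv + Dn * Dn)) :=
          mul_le_mul (hCφ x) hdec (by positivity) hCφ0
  -- integrability of the various space integrands at time t
  have hY1i : Integrable (fun x => (φ x : ℂ) * (pdC u t x * (starRingEnd ℂ) (pdC u t x)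
      + u t x * (starRingEnd ℂ) (pdC (pdC u) t x))) := by
    refine integrable_of_decay
      ((Complex.continuous_ofReal.comp hφc).mul
        (((hc_ux t).mul (hc_conj (hc_ux t))).add ((hc_u t).mul (hc_conj (hc_uxx t)))))
      (Cφ * (Dux * Dux + Du * Duxx)) fun x => ?_
    have hnorm : ‖(φ x : ℂ) * (pdC u t x * (starRingEnd ℂ) (pdC u t x)
        + u t x * (starRingEnd ℂ) (pdC (pdC u) t x))‖
        ≤ |φ x| * (‖pdC u t x‖ * ‖pdC u t x‖ + ‖u t x‖ * ‖pdC (pdC u) t x‖) := by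
      rw [norm_mul, Complex.norm_real, Real.norm_eq_abs]
      refine mul_le_mul_of_nonneg_left ?_ (abs_nonneg _)
      refine (norm_add_le _ _).trans ?_
      rw [norm_mul, norm_mul, RCLike.norm_conj, RCLike.norm_conj]
    have hdec : (1 + x ^ 2) * (‖pdC u t x‖ * ‖pdC u t x‖ + ‖u t x‖ * ‖pdC (pdC u) t x‖)
        ≤ Dux * Dux + Du * Duxx :=
      decay_add2 (decay_mul2 (norm_nonneg _) (norm_nonneg _) (sDux t x hTt) (hDux t x hTt))
        (decay_mul2 (norm_nonneg _) (norm_nonneg _) (sDu t x hTt) (hDuxx t x hTt))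
    calc (1 + x ^ 2) * ‖_‖
        ≤ (1 + x ^ 2) * (|φ x| * (‖pdC u t x‖ * ‖pdC u t x‖ + ‖u t x‖ * ‖pdC (pdC u) t x‖)) :=
          mul_le_mul_of_nonneg_left hnorm (by positivity)
      _ = |φ x| * ((1 + x ^ 2) * (‖pdC u t x‖ * ‖pdC u t x‖ + ‖u t x‖ * ‖pdC (pdC u) t x‖)) := by
          ring
      _ ≤ Cφ * (Dux * Dux + Du * Duxx) := mul_le_mul (hCφ x) hdec (by positivity) hCφ0
  have hZ1i : Integrable (fun x => ((deriv φ x : ℝ) : ℂ) * (u t x * (starRingEnd ℂ) (pdC u t x))) := by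
    refine integrable_of_decay
      ((Complex.continuous_ofReal.comp hφ'c).mul ((hc_u t).mul (hc_conj (hc_ux t))))
      (Cφ' * (Du * Dux)) fun x => ?_
    have hnorm : ‖((deriv φ x : ℝ) : ℂ) * (u t x * (starRingEnd ℂ) (pdC u t x))‖
        = |deriv φ x| * (‖u t x‖ * ‖pdC u t x‖) := by
      rw [norm_mul, Complex.norm_real, Real.norm_eq_abs, norm_mul, RCLike.norm_conj]
    rw [hnorm]
    calc (1 + x ^ 2) * (|deriv φ x| * (‖u t x‖ * ‖pdC u t x‖))
        = |deriv φ x| * ((1 + x ^ 2) * (‖u t x‖ * ‖pdC u t x‖)) := by ring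
      _ ≤ Cφ' * (Du * Dux) := mul_le_mul (hCφ' x)
          (decay_mul2 (norm_nonneg _) (norm_nonneg _) (sDu t x hTt) (hDux t x hTt))
          (by positivity) hCφ'0
  have hW1i : Integrable (fun x => (φ x : ℂ) * (u t x * (starRingEnd ℂ) (pdC u t x))) := by
    refine integrable_of_decay
      ((Complex.continuous_ofReal.comp hφc).mul ((hc_u t).mul (hc_conj (hc_ux t))))
      (Cφ * (Du * Dux)) fun x => ?_
    have hnorm : ‖(φ x : ℂ) * (u t x * (starRingEnd ℂ) (pdC u t x))‖
        = |φ x| * (‖u t x‖ * ‖pdC u t x‖) := by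
      rw [norm_mul, Complex.norm_real, Real.norm_eq_abs, norm_mul, RCLike.norm_conj]
    rw [hnorm]
    calc (1 + x ^ 2) * (|φ x| * (‖u t x‖ * ‖pdC u t x‖))
        = |φ x| * ((1 + x ^ 2) * (‖u t x‖ * ‖pdC u t x‖)) := by ring
      _ ≤ Cφ * (Du * Dux) := mul_le_mul (hCφ x)
          (decay_mul2 (norm_nonneg _) (norm_nonneg _) (sDu t x hTt) (hDux t x hTt))
          (by positivity) hCφ0
  have hY2i : Integrable (fun x => φ x * (pdR v t x * n t x + v t x * pdR n t x)) := by
    refine integrable_of_decay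
      (hφc.mul (((hc_vx t).mul (hc_n t)).add ((hc_v t).mul (hc_nx t))))
      (Cφ * (Dn * Dvx + Dv * Dnx)) fun x => ?_
    have hnorm : ‖φ x * (pdR v t x * n t x + v t x * pdR n t x)‖
        ≤ |φ x| * (|n t x| * |pdR v t x| + |v t x| * |pdR n t x|) := by
      rw [Real.norm_eq_abs, abs_mul]
      refine mul_le_mul_of_nonneg_left ?_ (abs_nonneg _)
      refine (abs_add_le _ _).trans ?_
      rw [abs_mul, abs_mul]
      ring_nf
      exact le_rfl
    have hdec : (1 + x ^ 2) * (|n t x| * |pdR v t x| + |v t x| * |pdR n t x|)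
        ≤ Dn * Dvx + Dv * Dnx :=
      decay_add2 (decay_mul2 (abs_nonneg _) (abs_nonneg _) (sDn t x hTt) (hDvx t x hTt))
        (decay_mul2 (abs_nonneg _) (abs_nonneg _) (sDv t x hTt) (hDnx t x hTt))
    calc (1 + x ^ 2) * ‖_‖
        ≤ (1 + x ^ 2) * (|φ x| * (|n t x| * |pdR v t x| + |v t x| * |pdR n t x|)) :=
          mul_le_mul_of_nonneg_left hnorm (by positivity)
      _ = |φ x| * ((1 + x ^ 2) * (|n t x| * |pdR v t x| + |v t x| * |pdR n t x|)) := by ring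
      _ ≤ Cφ * (Dn * Dvx + Dv * Dnx) := mul_le_mul (hCφ x) hdec (by positivity) hCφ0
  have hZ2i : Integrable (fun x => deriv φ x * (v t x * n t x)) := by
    refine integrable_of_decay (hφ'c.mul ((hc_v t).mul (hc_n t))) (Cφ' * (Dv * Dn)) fun x => ?_
    have hnorm : ‖deriv φ x * (v t x * n t x)‖ = |deriv φ x| * (|v t x| * |n t x|) := by
      rw [Real.norm_eq_abs, abs_mul, abs_mul]
    rw [hnorm]
    calc (1 + x ^ 2) * (|deriv φ x| * (|v t x| * |n t x|))
        = |deriv φ x| * ((1 + x ^ 2) * (|v t x| * |n t x|)) := by ring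
      _ ≤ Cφ' * (Dv * Dn) := mul_le_mul (hCφ' x)
          (decay_mul2 (abs_nonneg _) (abs_nonneg _) (sDv t x hTt) (hDn t x hTt))
          (by positivity) hCφ'0
  have hW2i : Integrable (fun x => φ x * (v t x * n t x)) := by
    refine integrable_of_decay (hφc.mul ((hc_v t).mul (hc_n t))) (Cφ * (Dv * Dn)) fun x => ?_
    have hnorm : ‖φ x * (v t x * n t x)‖ = |φ x| * (|v t x| * |n t x|) := by
      rw [Real.norm_eq_abs, abs_mul, abs_mul]
    rw [hnorm]
    calc (1 + x ^ 2) * (|φ x| * (|v t x| * |n t x|))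
        = |φ x| * ((1 + x ^ 2) * (|v t x| * |n t x|)) := by ring
      _ ≤ Cφ * (Dv * Dn) := mul_le_mul (hCφ x)
          (decay_mul2 (abs_nonneg _) (abs_nonneg _) (sDv t x hTt) (hDn t x hTt))
          (by positivity) hCφ0
  have hY3i : Integrable (fun x => ((φ x * v t x : ℝ) : ℂ)
      * (u t x * (starRingEnd ℂ) (pdC u t x))) := by
    refine integrable_of_decay
      ((Complex.continuous_ofReal.comp (hφc.mul (hc_v t))).mul
        ((hc_u t).mul (hc_conj (hc_ux t))))
      (Cφ * Dv * (Du * Dux)) fun x => ?_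
    have hnorm : ‖((φ x * v t x : ℝ) : ℂ) * (u t x * (starRingEnd ℂ) (pdC u t x))‖
        = |φ x| * |v t x| * (‖u t x‖ * ‖pdC u t x‖) := by
      rw [norm_mul, Complex.norm_real, Real.norm_eq_abs, abs_mul, norm_mul, RCLike.norm_conj]
    rw [hnorm]
    have hφv : |φ x| * |v t x| ≤ Cφ * Dv :=
      mul_le_mul (hCφ x) (sDv t x hTt) (abs_nonneg _) hCφ0
    calc (1 + x ^ 2) * (|φ x| * |v t x| * (‖u t x‖ * ‖pdC u t x‖))
        = (|φ x| * |v t x|) * ((1 + x ^ 2) * (‖u t x‖ * ‖pdC u t x‖)) := by ring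
      _ ≤ Cφ * Dv * (Du * Dux) := mul_le_mul hφv
          (decay_mul2 (norm_nonneg _) (norm_nonneg _) (sDu t x hTt) (hDux t x hTt))
          (by positivity) (mul_nonneg hCφ0 hDv0)
  -- differentiation under the integral sign
  have hbint : Integrable (fun x : ℝ => K * (1 + x ^ 2)⁻¹) := integrable_inv_one_add_sq.const_mul K
  have hmeas : ∀ᶠ s in nhds t, AEStronglyMeasurable
      (fun x => φ x * (‖u s x‖ ^ 2 + v s x ^ 2 + n s x ^ 2)) volume :=
    Filter.Eventually.of_forall fun s =>
      (hφc.mul ((((hc_u s).norm.pow 2).add ((hc_v s).pow 2)).add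
        ((hc_n s).pow 2))).aestronglyMeasurable
  have hG'meas : AEStronglyMeasurable (G t) volume := by
    apply Continuous.aestronglyMeasurable
    rw [hGdef]
    exact hφc.mul (((Complex.continuous_re.comp (((hc_ut t).mul (hc_conj (hc_u t))).add
      ((hc_u t).mul (hc_conj (hc_ut t))))).add
      (((hc_vt t).mul (hc_v t)).add ((hc_v t).mul (hc_vt t)))).add
      (((hc_nt t).mul (hc_n t)).add ((hc_n t).mul (hc_nt t))))
  obtain ⟨-, hder⟩ := hasDerivAt_integral_of_dominated_loc_of_deriv_le
    (F := fun s x => φ x * (‖u s x‖ ^ 2 + v s x ^ 2 + n s x ^ 2)) (F' := G)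
    (bound := fun x => K * (1 + x ^ 2)⁻¹) (Metric.ball_mem_nhds t one_pos) hmeas hFint hG'meas
    (Filter.Eventually.of_forall fun x s hs => hGbound x s hs) hbint
    (Filter.Eventually.of_forall fun x s _ => hGderiv s x)
  -- pointwise rewriting of G t using the PDE
  have hGt : ∀ x : ℝ, G t x
      = 2 * ((Complex.ofReal (φ x) * (pdC u t x * (starRingEnd ℂ) (pdC u t x)
          + u t x * (starRingEnd ℂ) (pdC (pdC u) t x))).im)
        - 2 * (φ x * (pdR v t x * n t x + v t x * pdR n t x))
        - 4 * ((Complex.ofReal (φ x * v t x) * (u t x * (starRingEnd ℂ) (pdC u t x))).re) := by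
    intro x
    have habs : pdR (fun s y => n s y + ‖u s y‖ ^ 2) t x
        = pdR n t x + (pdC u t x * (starRingEnd ℂ) (u t x)
            + u t x * (starRingEnd ℂ) (pdC u t x)).re := by
      have h2 := hdx_u t x
      have h4 := hasDerivAt_re' (h2.mul (hasDerivAt_conj' h2))
      have h4' : HasDerivAt (fun y => ‖u t y‖ ^ 2)
          ((pdC u t x * (starRingEnd ℂ) (u t x) + u t x * (starRingEnd ℂ) (pdC u t x)).re) x := by
        refine h4.congr_of_eventuallyEq (Filter.Eventually.of_forall fun y => ?_)
        have hz := mul_conj_re' (u t y)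
        exact hz.symm
      have h5 := ((hdx_n t x).add h4').deriv
      simpa only [pdR, Pi.add_def] using h5
    have hvt : pdtR v t x = -(pdR n t x) - (pdC u t x * (starRingEnd ℂ) (u t x)
        + u t x * (starRingEnd ℂ) (pdC u t x)).re := by
      have h := heq_v t x; rw [habs] at h; linarith
    have hnt : pdtR n t x = -(pdR v t x) := by have h := heq_n t x; linarith
    have hkey := key_alg (u t x) (pdtC u t x) (pdC (pdC u) t x) (pdC u t x) (n t x) (heq_u t x)
    rw [hGdef]
    simp only
    rw [hkey, hvt, hnt]
    simp only [Complex.ofReal_mul, Complex.mul_im, Complex.mul_re, Complex.add_im, Complex.add_re,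
      Complex.ofReal_re, Complex.ofReal_im, Complex.conj_re, Complex.conj_im]
    ring
  -- split the integral
  have him : ∫ x, (((φ x : ℂ) * (pdC u t x * (starRingEnd ℂ) (pdC u t x)
      + u t x * (starRingEnd ℂ) (pdC (pdC u) t x))).im)
      = (∫ x, (φ x : ℂ) * (pdC u t x * (starRingEnd ℂ) (pdC u t x)
          + u t x * (starRingEnd ℂ) (pdC (pdC u) t x))).im := by
    simpa using Complex.imCLM.integral_comp_comm hY1i
  have hre : ∫ x, ((((φ x * v t x : ℝ) : ℂ) * (u t x * (starRingEnd ℂ) (pdC u t x))).re)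
      = (∫ x, ((φ x * v t x : ℝ) : ℂ) * (u t x * (starRingEnd ℂ) (pdC u t x))).re := by
    simpa using Complex.reCLM.integral_comp_comm hY3i
  have hsplit : ∫ x, G t x
      = 2 * (∫ x, (φ x : ℂ) * (pdC u t x * (starRingEnd ℂ) (pdC u t x)
            + u t x * (starRingEnd ℂ) (pdC (pdC u) t x))).im
        - 2 * (∫ x, φ x * (pdR v t x * n t x + v t x * pdR n t x))
        - 4 * (∫ x, ((φ x * v t x : ℝ) : ℂ) * (u t x * (starRingEnd ℂ) (pdC u t x))).re := by
    have hY1im : Integrable (fun x => ((φ x : ℂ) * (pdC u t x * (starRingEnd ℂ) (pdC u t x)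
        + u t x * (starRingEnd ℂ) (pdC (pdC u) t x))).im) := by simpa using hY1i.im
    have hY3re : Integrable (fun x => (((φ x * v t x : ℝ) : ℂ)
        * (u t x * (starRingEnd ℂ) (pdC u t x))).re) := by simpa using hY3i.re
    calc ∫ x, G t x
        = ∫ x, (2 * (((φ x : ℂ) * (pdC u t x * (starRingEnd ℂ) (pdC u t x)
            + u t x * (starRingEnd ℂ) (pdC (pdC u) t x))).im)
          - 2 * (φ x * (pdR v t x * n t x + v t x * pdR n t x))
          - 4 * ((((φ x * v t x : ℝ) : ℂ) * (u t x * (starRingEnd ℂ) (pdC u t x))).re)) :=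
          integral_congr_ae (Filter.Eventually.of_forall fun x => hGt x)
      _ = _ := by
          have h1 : Integrable (fun x => 2 * (((φ x : ℂ) * (pdC u t x * (starRingEnd ℂ)
              (pdC u t x) + u t x * (starRingEnd ℂ) (pdC (pdC u) t x))).im)
              - 2 * (φ x * (pdR v t x * n t x + v t x * pdR n t x))) :=
            (hY1im.const_mul 2).sub (hY2i.const_mul 2)
          have h2 : Integrable (fun x => 4 * ((((φ x * v t x : ℝ) : ℂ)
              * (u t x * (starRingEnd ℂ) (pdC u t x))).re)) := hY3re.const_mul 4
          have h3 : Integrable (fun x => 2 * (((φ x : ℂ) * (pdC u t x * (starRingEnd ℂ)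
              (pdC u t x) + u t x * (starRingEnd ℂ) (pdC (pdC u) t x))).im)) :=
            hY1im.const_mul 2
          have h4 : Integrable (fun x => 2 * (φ x * (pdR v t x * n t x + v t x * pdR n t x))) :=
            hY2i.const_mul 2
          rw [integral_sub h1 h2, integral_sub h3 h4,
            integral_const_mul, integral_const_mul, integral_const_mul, him, hre]
  -- integration by parts
  have hibpA : (∫ x, (φ x : ℂ) * (pdC u t x * (starRingEnd ℂ) (pdC u t x)
        + u t x * (starRingEnd ℂ) (pdC (pdC u) t x)))
      = - ∫ x, ((deriv φ x : ℝ) : ℂ) * (u t x * (starRingEnd ℂ) (pdC u t x)) := by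
    have hu' : ∀ x : ℝ, HasDerivAt (fun y => ((φ y : ℝ) : ℂ)) ((deriv φ x : ℝ) : ℂ) x :=
      fun x => hasDerivAt_ofReal' (hφd x)
    have hv' : ∀ x : ℝ, HasDerivAt (fun y => u t y * (starRingEnd ℂ) (pdC u t y))
        (pdC u t x * (starRingEnd ℂ) (pdC u t x)
          + u t x * (starRingEnd ℂ) (pdC (pdC u) t x)) x :=
      fun x => (hdx_u t x).mul (hasDerivAt_conj' (hdx_ux t x))
    exact integral_mul_deriv_eq_deriv_mul_of_integrable (fun x _ => hu' x) (fun x _ => hv' x) hY1i hZ1i hW1i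
  have hibpB : (∫ x, φ x * (pdR v t x * n t x + v t x * pdR n t x))
      = - ∫ x, deriv φ x * (v t x * n t x) :=
    integral_mul_deriv_eq_deriv_mul_of_integrable (fun x _ => hφd x)
      (fun x _ => (hdx_v t x).mul (hdx_n t x)) hY2i hZ2i hW2i
  have hval : ∫ x, G t x
      = -2 * (∫ x : ℝ, Complex.ofReal (deriv φ x)
            * (u t x * (starRingEnd ℂ) (pdC u t x))).im
        + 2 * (∫ x : ℝ, deriv φ x * (v t x * n t x))
        - 4 * (∫ x : ℝ, Complex.ofReal (φ x * v t x)
            * (u t x * (starRingEnd ℂ) (pdC u t x))).re := by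
    rw [hsplit, hibpA, hibpB]
    simp only [Complex.neg_im]
    ring
  rw [← hval]
  exact hder
end
end

section
/- Let (u,n,v) be a classical solution of the reduced Zakharov system (ZSb), let φ ∈ C²(ℝ) be bounded together with its first two derivatives, and let λ, μ : ℝ → ℝ be C¹ functions with λ(t) > 0. Define K(t) = ½∫_ℝ φ((x+μ(t))/λ(t)) |u(t,x)|² dx. Then dK/dt(t) = (1/λ(t)) Im ∫_ℝ φ'((x+μ(t))/λ(t)) conj(u(t,x)) ∂ₓu(t,x) dx + (μ'(t)/(2λ(t))) ∫_ℝ φ'((x+μ(t))/λ(t)) |u(t,x)|² dx − (λ'(t)/(2λ(t))) ∫_ℝ φ'((x+μ(t))/λ(t)) ((x+μ(t))/λ(t)) |u(t,x)|² dx. -/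
open MeasureTheory Filter Real Set
open Topology

noncomputable section

/-! ### Auxiliary lemmas -/

/-- decay ⇒ integrable -/
lemma integrable_of_decay_s13 {E : Type*} [NormedAddCommGroup E] {f : ℝ → E}
    (hc : Continuous f) {C0 C2 : ℝ} (h0 : ∀ x, ‖f x‖ ≤ C0) (h2 : ∀ x, x^2 * ‖f x‖ ≤ C2) :
    Integrable f := by
  apply Integrable.mono' ((integrable_inv_one_add_sq).const_mul (C0 + C2))
    hc.aestronglyMeasurable
  filter_upwards with x
  have h1 : (1 + x^2) * ‖f x‖ ≤ C0 + C2 := by nlinarith [h0 x, h2 x, norm_nonneg (f x)]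
  have hx : (0:ℝ) < 1 + x^2 := by positivity
  calc ‖f x‖ = ((1+x^2) * ‖f x‖) * (1+x^2)⁻¹ := by field_simp
    _ ≤ (C0+C2) * (1+x^2)⁻¹ := by
        apply mul_le_mul_of_nonneg_right h1 (by positivity)

/-- decay ⇒ tendsto 0 at ±∞ -/
lemma tendsto_zero_of_decay {E : Type*} [NormedAddCommGroup E] {f : ℝ → E}
    {C : ℝ} (h : ∀ x, |x| * ‖f x‖ ≤ C) :
    Tendsto f atTop (𝓝 0) ∧ Tendsto f atBot (𝓝 0) := by
  constructor
  · apply squeeze_zero_norm' (a := fun x => C / x)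
    · filter_upwards [eventually_ge_atTop (1:ℝ)] with x hx
      have := h x
      rw [abs_of_pos (by linarith)] at this
      rw [le_div_iff₀ (by linarith : (0:ℝ) < x)]
      linarith
    · exact tendsto_const_nhds.div_atTop tendsto_id
  · apply squeeze_zero_norm' (a := fun x => C / (-x))
    · filter_upwards [eventually_le_atBot (-1:ℝ)] with x hx
      have hx0 : (0:ℝ) < -x := by linarith
      have := h x
      rw [abs_of_neg (by linarith)] at this
      rw [le_div_iff₀ hx0]
      linarith
    · exact tendsto_const_nhds.div_atTop (tendsto_neg_atBot_atTop)

/-- FTC on ℝ: integral of derivative vanishing at ±∞ is zero. -/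
lemma integral_deriv_eq_zero' {E : Type*} [NormedAddCommGroup E] [NormedSpace ℝ E]
    [CompleteSpace E] {g g' : ℝ → E}
    (hd : ∀ x, HasDerivAt g (g' x) x) (hi : Integrable g')
    (ht : Tendsto g atTop (𝓝 0)) (hb : Tendsto g atBot (𝓝 0)) :
    ∫ x, g' x = 0 := by
  rw [← intervalIntegral.integral_Iic_add_Ioi (b := (0:ℝ)) hi.integrableOn hi.integrableOn]
  rw [integral_Iic_of_hasDerivAt_of_tendsto' (fun x _ => hd x) hi.integrableOn hb,
      integral_Ioi_of_hasDerivAt_of_tendsto' (fun x _ => hd x) hi.integrableOn ht]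
  abel

/-- derivative of squared norm of a complex-valued path -/
lemma hasDerivAt_norm_sq_comp {f : ℝ → ℂ} {f' : ℂ} {s : ℝ} (hf : HasDerivAt f f' s) :
    HasDerivAt (fun s => ‖f s‖^2) (2 * ((starRingEnd ℂ) (f s) * f').re) s := by
  have hre : HasDerivAt (fun s => (f s).re) f'.re s :=
    (Complex.reCLM.hasFDerivAt.comp_hasDerivAt s hf)
  have him : HasDerivAt (fun s => (f s).im) f'.im s :=
    (Complex.imCLM.hasFDerivAt.comp_hasDerivAt s hf)
  have heq : (fun s => ‖f s‖^2) = fun s => (f s).re*(f s).re + (f s).im*(f s).im := by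
    funext y
    rw [← Complex.normSq_apply, ← Complex.sq_norm]
  rw [heq]
  refine ((hre.mul hre).add (him.mul him)).congr_deriv ?_
  simp [Complex.mul_re]
  ring

section SliceLemmas

variable {u : ℝ → ℝ → ℂ}

lemma slice_x (hu : ContDiff ℝ (⊤ : ℕ∞) fun p : ℝ × ℝ => u p.1 p.2) (t : ℝ) :
    ContDiff ℝ ((⊤:ℕ∞):WithTop ℕ∞) (fun y => u t y) :=
  (hu.comp (contDiff_const.prodMk contDiff_id)).of_le (by simp)

lemma slice_t (hu : ContDiff ℝ (⊤ : ℕ∞) fun p : ℝ × ℝ => u p.1 p.2) (x : ℝ) :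
    ContDiff ℝ ((⊤:ℕ∞):WithTop ℕ∞) (fun s => u s x) :=
  (hu.comp (contDiff_id.prodMk contDiff_const)).of_le (by simp)

lemma contDiff_pdC_slice (hu : ContDiff ℝ (⊤ : ℕ∞) fun p : ℝ × ℝ => u p.1 p.2) (t : ℝ) :
    ContDiff ℝ ((⊤:ℕ∞):WithTop ℕ∞) (fun x => pdC u t x) := by
  have h : (fun x => pdC u t x) = deriv (fun y => u t y) := rfl
  rw [h]
  exact (contDiff_infty_iff_deriv.mp (slice_x hu t)).2

lemma contDiff_pdC2_slice (hu : ContDiff ℝ (⊤ : ℕ∞) fun p : ℝ × ℝ => u p.1 p.2) (t : ℝ) :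
    ContDiff ℝ ((⊤:ℕ∞):WithTop ℕ∞) (fun x => pdC (pdC u) t x) := by
  have h : (fun x => pdC (pdC u) t x) = deriv (fun y => pdC u t y) := rfl
  rw [h]
  exact (contDiff_infty_iff_deriv.mp (contDiff_pdC_slice hu t)).2

lemma hasDerivAt_pdC (hu : ContDiff ℝ (⊤ : ℕ∞) fun p : ℝ × ℝ => u p.1 p.2) (t x : ℝ) :
    HasDerivAt (fun y => u t y) (pdC u t x) x :=
  ((slice_x hu t).differentiable (by simp) x).hasDerivAt

lemma hasDerivAt_pdC2 (hu : ContDiff ℝ (⊤ : ℕ∞) fun p : ℝ × ℝ => u p.1 p.2) (t x : ℝ) :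
    HasDerivAt (fun y => pdC u t y) (pdC (pdC u) t x) x :=
  ((contDiff_pdC_slice hu t).differentiable (by simp) x).hasDerivAt

lemma hasDerivAt_pdtC (hu : ContDiff ℝ (⊤ : ℕ∞) fun p : ℝ × ℝ => u p.1 p.2) (t x : ℝ) :
    HasDerivAt (fun s => u s x) (pdtC u t x) t :=
  ((slice_t hu x).differentiable (by simp) t).hasDerivAt

lemma pdtC_eq_fderiv (hu : ContDiff ℝ (⊤ : ℕ∞) fun p : ℝ × ℝ => u p.1 p.2) (t x : ℝ) :
    pdtC u t x = fderiv ℝ (fun p : ℝ × ℝ => u p.1 p.2) (t, x) (1, 0) := by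
  have h : HasDerivAt (fun s => u s x)
      (fderiv ℝ (fun p : ℝ × ℝ => u p.1 p.2) (t, x) (1, 0)) t := by
    have := ((hu.differentiable (by simp) (t, x)).hasFDerivAt).comp_hasDerivAt t
      ((hasDerivAt_id t).prodMk (hasDerivAt_const t x))
    exact this
  rw [pdtC]; exact h.deriv

lemma continuous_pdtC (hu : ContDiff ℝ (⊤ : ℕ∞) fun p : ℝ × ℝ => u p.1 p.2) :
    Continuous fun p : ℝ × ℝ => pdtC u p.1 p.2 := by
  have h : (fun p : ℝ × ℝ => pdtC u p.1 p.2)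
      = fun p : ℝ × ℝ => fderiv ℝ (fun p : ℝ × ℝ => u p.1 p.2) p (1, 0) := by
    funext p; exact pdtC_eq_fderiv hu p.1 p.2
  rw [h]
  exact (hu.continuous_fderiv (by simp)).clm_apply continuous_const

end SliceLemmas

set_option maxHeartbeats 1000000 in
/-- time-dependent virial identity for the localized mass
`K(t) = ½∫φ((x+μ)/λ)|u|²` of the Zakharov system. -/
theorem zakharov_time_dependent_mass_virial
    (u : ℝ → ℝ → ℂ) (n v : ℝ → ℝ → ℝ)
    (hsol : IsZakharovSolution u n v)
    (φ : ℝ → ℝ) (hφ : ContDiff ℝ 2 φ)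
    (hφbdd : ∀ k ≤ 2, ∃ C : ℝ, ∀ x : ℝ, |iteratedDeriv k φ x| ≤ C)
    (lam μ : ℝ → ℝ) (hlamC1 : ContDiff ℝ 1 lam) (hμC1 : ContDiff ℝ 1 μ)
    (hlampos : ∀ t : ℝ, 0 < lam t) :
    ∀ t : ℝ, HasDerivAt
      (fun s => (1/2) * ∫ x : ℝ, φ ((x + μ s) / lam s) * ‖u s x‖ ^ 2)
      ((1 / lam t) * (∫ x : ℝ, Complex.ofReal (deriv φ ((x + μ t) / lam t))
            * ((starRingEnd ℂ) (u t x) * pdC u t x)).im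
        + (deriv μ t / (2 * lam t))
            * (∫ x : ℝ, deriv φ ((x + μ t) / lam t) * ‖u t x‖ ^ 2)
        - (deriv lam t / (2 * lam t))
            * (∫ x : ℝ, deriv φ ((x + μ t) / lam t) * ((x + μ t) / lam t)
                * ‖u t x‖ ^ 2)) t := by
  intro t
  have hu := hsol.smooth_u
  -- continuity facts
  have hcus : ∀ s, Continuous (fun x => u s x) := fun s => ((slice_x hu s).continuous)
  have hcux : ∀ s, Continuous (fun x => pdC u s x) := fun s =>
    (contDiff_pdC_slice hu s).continuous
  have hcuxx : ∀ s, Continuous (fun x => pdC (pdC u) s x) := fun s =>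
    (contDiff_pdC2_slice hu s).continuous
  have hcut : ∀ s, Continuous (fun x => pdtC u s x) := fun s =>
    (continuous_pdtC hu).comp (Continuous.prodMk_right s)
  -- derivative facts
  have hux : ∀ s x, HasDerivAt (fun y => u s y) (pdC u s x) x := hasDerivAt_pdC hu
  have huxx : ∀ s x, HasDerivAt (fun y => pdC u s y) (pdC (pdC u) s x) x := hasDerivAt_pdC2 hu
  have hut : ∀ s x, HasDerivAt (fun r => u r x) (pdtC u s x) s := fun s x =>
    hasDerivAt_pdtC hu s x
  have hlamd : ∀ s, HasDerivAt lam (deriv lam s) s := fun s =>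
    ((hlamC1.differentiable one_ne_zero) s).hasDerivAt
  have hmud : ∀ s, HasDerivAt μ (deriv μ s) s := fun s =>
    ((hμC1.differentiable one_ne_zero) s).hasDerivAt
  have hφd : ∀ y, HasDerivAt φ (deriv φ y) y := fun y =>
    ((hφ.differentiable (by norm_num)) y).hasDerivAt
  have hφc : Continuous φ := hφ.continuous
  have hφ'c : Continuous (deriv φ) := hφ.continuous_deriv (by norm_num)
  -- φ bounds
  obtain ⟨Cp0, hCp0'⟩ := hφbdd 0 (by norm_num)
  have hφ0 : ∀ y, |φ y| ≤ Cp0 := by simpa [iteratedDeriv_zero] using hCp0'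
  obtain ⟨Cp1, hCp1'⟩ := hφbdd 1 (by norm_num)
  have hφ1 : ∀ y, |deriv φ y| ≤ Cp1 := by simpa [iteratedDeriv_one] using hCp1'
  have hCp0n : 0 ≤ Cp0 := le_trans (abs_nonneg _) (hφ0 0)
  have hCp1n : 0 ≤ Cp1 := le_trans (abs_nonneg _) (hφ1 0)
  -- Schwartz constants
  have key : ∀ j k l : ℕ, ∃ C : ℝ, 0 ≤ C ∧ ∀ s x : ℝ, |s| ≤ |t|+1 →
      |x|^k * ‖pdC^[l] (pdtC^[j] u) s x‖ ≤ C := by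
    intro j k l
    obtain ⟨C, hC⟩ := hsol.schwartz_u j k l (|t|+1)
    exact ⟨max C 0, le_max_right _ _, fun s x hs => (hC s x hs).trans (le_max_left _ _)⟩
  have hit2 : ∀ (w : ℝ → ℝ → ℂ), pdC^[2] w = pdC (pdC w) := fun w => rfl
  obtain ⟨C0, hC0n, hC0'⟩ := key 0 0 0
  have hC0 : ∀ s x : ℝ, |s| ≤ |t|+1 → ‖u s x‖ ≤ C0 := fun s x hs => by
    simpa using hC0' s x hs
  obtain ⟨C1, hC1n, hC1'⟩ := key 0 1 0
  have hC1 : ∀ s x : ℝ, |s| ≤ |t|+1 → |x| * ‖u s x‖ ≤ C1 := fun s x hs => by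
    simpa using hC1' s x hs
  obtain ⟨C2, hC2n, hC2'⟩ := key 0 2 0
  have hC2 : ∀ s x : ℝ, |s| ≤ |t|+1 → |x|^2 * ‖u s x‖ ≤ C2 := fun s x hs => by
    simpa using hC2' s x hs
  obtain ⟨C3, hC3n, hC3'⟩ := key 0 3 0
  have hC3 : ∀ s x : ℝ, |s| ≤ |t|+1 → |x|^3 * ‖u s x‖ ≤ C3 := fun s x hs => by
    simpa using hC3' s x hs
  obtain ⟨D0, hD0n, hD0'⟩ := key 1 0 0
  have hD0 : ∀ s x : ℝ, |s| ≤ |t|+1 → ‖pdtC u s x‖ ≤ D0 := fun s x hs => by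
    simpa using hD0' s x hs
  obtain ⟨E0, hE0n, hE0'⟩ := key 0 0 1
  have hE0 : ∀ s x : ℝ, |s| ≤ |t|+1 → ‖pdC u s x‖ ≤ E0 := fun s x hs => by
    simpa using hE0' s x hs
  obtain ⟨E2, hE2n, hE2'⟩ := key 0 2 1
  have hE2 : ∀ s x : ℝ, |s| ≤ |t|+1 → |x|^2 * ‖pdC u s x‖ ≤ E2 := fun s x hs => by
    simpa using hE2' s x hs
  obtain ⟨G0, hG0n, hG0'⟩ := key 0 0 2
  have hG0 : ∀ s x : ℝ, |s| ≤ |t|+1 → ‖pdC (pdC u) s x‖ ≤ G0 := fun s x hs => by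
    simpa [hit2] using hG0' s x hs
  obtain ⟨G2, hG2n, hG2'⟩ := key 0 2 2
  have hG2 : ∀ s x : ℝ, |s| ≤ |t|+1 → |x|^2 * ‖pdC (pdC u) s x‖ ≤ G2 := fun s x hs => by
    simpa [hit2] using hG2' s x hs
  -- lam/μ compact bounds
  have hIcc : IsCompact (Icc (t-1) (t+1)) := isCompact_Icc
  have htmem : t ∈ Icc (t-1) (t+1) := by constructor <;> linarith
  obtain ⟨Ml, hMl⟩ := hIcc.exists_bound_of_continuousOn (hlamC1.continuous.continuousOn)
  obtain ⟨Ml', hMl'⟩ := hIcc.exists_bound_of_continuousOn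
    ((hlamC1.continuous_deriv le_rfl).continuousOn)
  obtain ⟨Mm, hMm⟩ := hIcc.exists_bound_of_continuousOn (hμC1.continuous.continuousOn)
  obtain ⟨Mm', hMm'⟩ := hIcc.exists_bound_of_continuousOn
    ((hμC1.continuous_deriv le_rfl).continuousOn)
  have hMln : 0 ≤ Ml := le_trans (norm_nonneg _) (hMl t htmem)
  have hMl'n : 0 ≤ Ml' := le_trans (norm_nonneg _) (hMl' t htmem)
  have hMmn : 0 ≤ Mm := le_trans (norm_nonneg _) (hMm t htmem)
  have hMm'n : 0 ≤ Mm' := le_trans (norm_nonneg _) (hMm' t htmem)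
  obtain ⟨s₀, hs₀mem, hs₀min⟩ := hIcc.exists_isMinOn ⟨t, htmem⟩
    hlamC1.continuous.continuousOn
  have hδpos : 0 < lam s₀ := hlampos s₀
  set δ := lam s₀ with hδdef
  have hδle : ∀ s ∈ Icc (t-1) (t+1), δ ≤ lam s := fun s hs => hs₀min hs
  -- membership
  have hball : ∀ s ∈ Metric.ball t (1:ℝ), (s ∈ Icc (t-1) (t+1)) ∧ |s| ≤ |t|+1 := by
    intro s hs
    rw [Metric.mem_ball, Real.dist_eq] at hs
    have h1 := abs_lt.mp hs
    refine ⟨⟨by linarith [h1.1], by linarith [h1.2]⟩, ?_⟩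
    have h2 := abs_sub_abs_le_abs_sub s t
    linarith [le_of_lt hs]
  -- coefficient bound
  set A := (Mm' * Ml + Mm * Ml') / δ^2 with hAdef
  set B := Ml' / δ^2 with hBdef
  have hAn : 0 ≤ A := div_nonneg
    (add_nonneg (mul_nonneg hMm'n hMln) (mul_nonneg hMmn hMl'n)) (by positivity)
  have hBn : 0 ≤ B := div_nonneg hMl'n (by positivity)
  have hq : ∀ s ∈ Icc (t-1) (t+1), ∀ x : ℝ,
      |(deriv μ s * lam s - (x + μ s) * deriv lam s) / lam s ^ 2| ≤ A + B * |x| := by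
    intro s hs x
    have h1 : |deriv μ s| ≤ Mm' := by have := hMm' s hs; rwa [Real.norm_eq_abs] at this
    have h2 : |lam s| ≤ Ml := by have := hMl s hs; rwa [Real.norm_eq_abs] at this
    have h3 : |μ s| ≤ Mm := by have := hMm s hs; rwa [Real.norm_eq_abs] at this
    have h4 : |deriv lam s| ≤ Ml' := by have := hMl' s hs; rwa [Real.norm_eq_abs] at this
    have h5 : δ ≤ lam s := hδle s hs
    have hnum : |deriv μ s * lam s - (x + μ s) * deriv lam s|
        ≤ Mm' * Ml + (|x| + Mm) * Ml' := by
      have hxa : |x + μ s| ≤ |x| + Mm := (abs_add_le _ _).trans (by linarith)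
      have e1 : |deriv μ s| * |lam s| ≤ Mm' * Ml :=
        mul_le_mul h1 h2 (abs_nonneg _) hMm'n
      have e2 : |x + μ s| * |deriv lam s| ≤ (|x| + Mm) * Ml' :=
        mul_le_mul hxa h4 (abs_nonneg _) (add_nonneg (abs_nonneg x) hMmn)
      calc |deriv μ s * lam s - (x + μ s) * deriv lam s|
          ≤ |deriv μ s * lam s| + |(x + μ s) * deriv lam s| := abs_sub _ _
        _ = |deriv μ s| * |lam s| + |x + μ s| * |deriv lam s| := by rw [abs_mul, abs_mul]
        _ ≤ Mm' * Ml + (|x| + Mm) * Ml' := by linarith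
    have h6 : δ^2 ≤ |lam s|^2 := by
      have : δ ≤ |lam s| := le_trans h5 (le_abs_self _)
      nlinarith [hδpos.le]
    rw [abs_div, abs_pow]
    calc |deriv μ s * lam s - (x + μ s) * deriv lam s| / |lam s|^2
        ≤ (Mm' * Ml + (|x| + Mm) * Ml') / δ^2 := by
          apply div_le_div₀ (by positivity) hnum (by positivity) h6
      _ = A + B * |x| := by rw [hAdef, hBdef]; field_simp; ring
  clear_value A B δ
  -- derivative in s of the integrand
  have hFd : ∀ (x s : ℝ), HasDerivAt (fun r => φ ((x + μ r) / lam r) * ‖u r x‖ ^ 2)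
      (deriv φ ((x + μ s) / lam s)
          * ((deriv μ s * lam s - (x + μ s) * deriv lam s) / lam s ^ 2) * ‖u s x‖ ^ 2
        + φ ((x + μ s) / lam s) * (2 * ((starRingEnd ℂ) (u s x) * pdtC u s x).re)) s := by
    intro x s
    have hξd : HasDerivAt (fun r => (x + μ r) / lam r)
        ((deriv μ s * lam s - (x + μ s) * deriv lam s) / lam s ^ 2) s :=
      ((hmud s).const_add x).div (hlamd s) (ne_of_gt (hlampos s))
    have h2 : HasDerivAt (fun r => φ ((x + μ r) / lam r))
        (deriv φ ((x + μ s) / lam s)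
          * ((deriv μ s * lam s - (x + μ s) * deriv lam s) / lam s ^ 2)) s :=
      (hφd _).comp s hξd
    have h3 := hasDerivAt_norm_sq_comp (f := fun r => u r x) (hut s x)
    exact h2.mul h3
  set M := Cp1*A*(C0*C0) + Cp1*A*(C2*C0) + Cp1*B*(C1*C0) + Cp1*B*(C3*C0)
    + 2*Cp0*(C0*D0) + 2*Cp0*(C2*D0) with hMdef
  clear_value M
  have h_bound : ∀ x : ℝ, ∀ s ∈ Metric.ball t (1:ℝ),
      |deriv φ ((x + μ s) / lam s)
          * ((deriv μ s * lam s - (x + μ s) * deriv lam s) / lam s ^ 2) * ‖u s x‖ ^ 2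
        + φ ((x + μ s) / lam s) * (2 * ((starRingEnd ℂ) (u s x) * pdtC u s x).re)|
        ≤ M * (1 + x^2)⁻¹ := by
    intro x s hs
    obtain ⟨hsIcc, hsT⟩ := hball s hs
    have b0 := hC0 s x hsT
    have b1 := hC1 s x hsT
    have b2 := hC2 s x hsT
    have b3 := hC3 s x hsT
    have d0 := hD0 s x hsT
    have hq' := hq s hsIcc x
    have hun : (0:ℝ) ≤ ‖u s x‖ := norm_nonneg _
    have hwn : (0:ℝ) ≤ ‖pdtC u s x‖ := norm_nonneg _
    have key1 : |deriv φ ((x + μ s) / lam s)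
        * ((deriv μ s * lam s - (x + μ s) * deriv lam s) / lam s ^ 2) * ‖u s x‖ ^ 2|
        ≤ Cp1 * (A + B * |x|) * ‖u s x‖ ^ 2 := by
      rw [abs_mul, abs_mul, abs_of_nonneg (by positivity : (0:ℝ) ≤ ‖u s x‖^2)]
      exact mul_le_mul_of_nonneg_right
        (mul_le_mul (hφ1 _) hq' (abs_nonneg _) hCp1n) (by positivity)
    have key2 : |φ ((x + μ s) / lam s) * (2 * ((starRingEnd ℂ) (u s x) * pdtC u s x).re)|
        ≤ Cp0 * (2 * (‖u s x‖ * ‖pdtC u s x‖)) := by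
      rw [abs_mul]
      apply mul_le_mul (hφ0 _) ?_ (abs_nonneg _) hCp0n
      rw [abs_mul, abs_two]
      apply mul_le_mul_of_nonneg_left ?_ (by norm_num)
      calc |((starRingEnd ℂ) (u s x) * pdtC u s x).re|
          ≤ ‖(starRingEnd ℂ) (u s x) * pdtC u s x‖ := by
            simpa using
              Complex.abs_re_le_norm ((starRingEnd ℂ) (u s x) * pdtC u s x)
        _ = ‖u s x‖ * ‖pdtC u s x‖ := by rw [norm_mul, RCLike.norm_conj]
    have hx2 : |x|^2 = x^2 := sq_abs x
    have m1 : ‖u s x‖ * ‖u s x‖ ≤ C0 * C0 := mul_le_mul b0 b0 hun hC0n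
    have m2 : |x| * (‖u s x‖ * ‖u s x‖) ≤ C1 * C0 := by
      calc |x| * (‖u s x‖ * ‖u s x‖) = (|x| * ‖u s x‖) * ‖u s x‖ := by ring
        _ ≤ C1 * C0 := mul_le_mul b1 b0 hun hC1n
    have m3 : x^2 * (‖u s x‖ * ‖u s x‖) ≤ C2 * C0 := by
      calc x^2 * (‖u s x‖ * ‖u s x‖) = (|x|^2 * ‖u s x‖) * ‖u s x‖ := by rw [hx2]; ring
        _ ≤ C2 * C0 := mul_le_mul b2 b0 hun hC2n
    have m4 : x^2 * |x| * (‖u s x‖ * ‖u s x‖) ≤ C3 * C0 := by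
      calc x^2 * |x| * (‖u s x‖ * ‖u s x‖) = (|x|^3 * ‖u s x‖) * ‖u s x‖ := by
            rw [← hx2]; ring
        _ ≤ C3 * C0 := mul_le_mul b3 b0 hun hC3n
    have m5 : ‖u s x‖ * ‖pdtC u s x‖ ≤ C0 * D0 := mul_le_mul b0 d0 hwn hC0n
    have m6 : x^2 * (‖u s x‖ * ‖pdtC u s x‖) ≤ C2 * D0 := by
      calc x^2 * (‖u s x‖ * ‖pdtC u s x‖) = (|x|^2 * ‖u s x‖) * ‖pdtC u s x‖ := by
            rw [hx2]; ring
        _ ≤ C2 * D0 := mul_le_mul b2 d0 hwn hC2n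
    have hx2p : (0:ℝ) < 1 + x^2 := by positivity
    rw [show M * (1+x^2)⁻¹ = M / (1+x^2) from (div_eq_mul_inv M _).symm,
      le_div_iff₀ hx2p]
    have n1 : 0 ≤ Cp1 * A := mul_nonneg hCp1n hAn
    have n2 : 0 ≤ Cp1 * B := mul_nonneg hCp1n hBn
    have n3 : (0:ℝ) ≤ 2 * Cp0 := by linarith
    have step1 := (abs_add_le _ _).trans (add_le_add key1 key2)
    refine le_trans (mul_le_mul_of_nonneg_right step1 hx2p.le) ?_
    rw [hMdef]
    have i1 := mul_le_mul_of_nonneg_left m1 n1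
    have i2 := mul_le_mul_of_nonneg_left m3 n1
    have i3 := mul_le_mul_of_nonneg_left m2 n2
    have i4 := mul_le_mul_of_nonneg_left m4 n2
    have i5 := mul_le_mul_of_nonneg_left m5 n3
    have i6 := mul_le_mul_of_nonneg_left m6 n3
    calc (Cp1 * (A + B * |x|) * ‖u s x‖ ^ 2 + Cp0 * (2 * (‖u s x‖ * ‖pdtC u s x‖)))
          * (1 + x ^ 2)
        = Cp1*A*(‖u s x‖ * ‖u s x‖) + Cp1*A*(x^2*(‖u s x‖ * ‖u s x‖))
          + Cp1*B*(|x| *(‖u s x‖ * ‖u s x‖)) + Cp1*B*(x^2*|x| *(‖u s x‖ * ‖u s x‖))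
          + 2*Cp0*(‖u s x‖ * ‖pdtC u s x‖) + 2*Cp0*(x^2*(‖u s x‖ * ‖pdtC u s x‖)) := by
          ring
      _ ≤ _ := by linarith [i1, i2, i3, i4, i5, i6]
  have bound_int : Integrable (fun x : ℝ => M * (1 + x^2)⁻¹) :=
    integrable_inv_one_add_sq.const_mul M
  have hF_meas : ∀ᶠ s in 𝓝 t, AEStronglyMeasurable
      (fun x : ℝ => φ ((x + μ s) / lam s) * ‖u s x‖ ^ 2) volume := by
    filter_upwards with s
    exact ((hφc.comp ((continuous_id.add continuous_const).div_const _)).mul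
      (((hcus s).norm).pow 2)).aestronglyMeasurable
  have hFint : Integrable (fun x : ℝ => φ ((x + μ t)/lam t) * ‖u t x‖^2) := by
    have hsT : |t| ≤ |t| + 1 := by linarith
    apply integrable_of_decay_s13 (C0 := Cp0*(C0*C0)) (C2 := Cp0*(C2*C0))
    · exact (hφc.comp ((continuous_id.add continuous_const).div_const _)).mul
        (((hcus t).norm).pow 2)
    · intro x
      rw [Real.norm_eq_abs, abs_mul, abs_of_nonneg (by positivity : (0:ℝ) ≤ ‖u t x‖^2)]
      have h9 : ‖u t x‖^2 ≤ C0*C0 := by nlinarith [hC0 t x hsT, norm_nonneg (u t x)]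
      exact mul_le_mul (hφ0 _) h9 (by positivity) hCp0n
    · intro x
      rw [Real.norm_eq_abs, abs_mul, abs_of_nonneg (by positivity : (0:ℝ) ≤ ‖u t x‖^2)]
      calc x^2 * (|φ ((x + μ t)/lam t)| * ‖u t x‖^2)
          = |φ ((x + μ t)/lam t)| * (x^2 * ‖u t x‖^2) := by ring
        _ ≤ Cp0 * (C2*C0) := by
            apply mul_le_mul (hφ0 _) ?_ (by positivity) hCp0n
            calc x^2*‖u t x‖^2 = (|x|^2*‖u t x‖)*‖u t x‖ := by rw [sq_abs]; ring
              _ ≤ C2*C0 := mul_le_mul (hC2 t x hsT) (hC0 t x hsT) (norm_nonneg _) hC2n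
  have hF'_cont : Continuous (fun x : ℝ =>
      deriv φ ((x + μ t) / lam t)
          * ((deriv μ t * lam t - (x + μ t) * deriv lam t) / lam t ^ 2) * ‖u t x‖ ^ 2
        + φ ((x + μ t) / lam t) * (2 * ((starRingEnd ℂ) (u t x) * pdtC u t x).re)) := by
    apply Continuous.add
    · exact ((hφ'c.comp ((continuous_id.add continuous_const).div_const _)).mul
        (((continuous_const.mul continuous_const).sub
          ((continuous_id.add continuous_const).mul continuous_const)).div_const _)).mul
        (((hcus t).norm).pow 2)
    · exact (hφc.comp ((continuous_id.add continuous_const).div_const _)).mul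
        (continuous_const.mul (Complex.continuous_re.comp
          ((Complex.continuous_conj.comp (hcus t)).mul (hcut t))))
  have main := hasDerivAt_integral_of_dominated_loc_of_deriv_le (μ := volume) (x₀ := t)
    (s := Metric.ball t 1)
    (F := fun s x => φ ((x + μ s) / lam s) * ‖u s x‖ ^ 2)
    (F' := fun s x => deriv φ ((x + μ s) / lam s)
          * ((deriv μ s * lam s - (x + μ s) * deriv lam s) / lam s ^ 2) * ‖u s x‖ ^ 2
        + φ ((x + μ s) / lam s) * (2 * ((starRingEnd ℂ) (u s x) * pdtC u s x).re))
    (bound := fun x => M * (1 + x^2)⁻¹)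
    (Metric.ball_mem_nhds t one_pos) hF_meas hFint hF'_cont.aestronglyMeasurable
    (Eventually.of_forall fun x s hs => by
        simpa [Real.norm_eq_abs] using h_bound x s hs)
    bound_int
    (Eventually.of_forall fun x s _ => hFd x s)
  have hF'int := main.1
  have hKder := main.2.const_mul (1/2 : ℝ)
  refine hKder.congr_deriv ?_
  -- ===== Stage 2: identify the derivative integral =====
  have hne : lam t ≠ 0 := ne_of_gt (hlampos t)
  have hsTt : |t| ≤ |t| + 1 := by linarith
  have hLn : (0:ℝ) ≤ 1 / lam t := (one_div_pos.mpr (hlampos t)).le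
  have habs3 : ∀ (z w : ℂ), ‖(starRingEnd ℂ) z * w‖ = ‖z‖ * ‖w‖ := fun z w => by
    rw [norm_mul, RCLike.norm_conj]
  have him_le : ∀ z : ℂ, |z.im| ≤ ‖z‖ := fun z => by
    simpa using Complex.abs_im_le_norm z
  have hre_le : ∀ z : ℂ, |z.re| ≤ ‖z‖ := fun z => by
    simpa using Complex.abs_re_le_norm z
  have hxmu : ∀ x : ℝ, |x + μ t| ≤ |x| + Mm := fun x => by
    have h3 : |μ t| ≤ Mm := by have := hMm t htmem; rwa [Real.norm_eq_abs] at this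
    exact (abs_add_le _ _).trans (by linarith)
  -- pointwise consequence of the PDE
  have hpt : ∀ x : ℝ, ((starRingEnd ℂ) (u t x) * pdtC u t x).re
      = -((starRingEnd ℂ) (u t x) * pdC (pdC u) t x).im := by
    intro x
    have h1 := hsol.eq_u t x
    have h3 : Complex.I * pdtC u t x = (n t x : ℂ) * u t x - pdC (pdC u) t x := by
      linear_combination h1
    have h2 : pdtC u t x = (n t x : ℂ) * u t x * (-Complex.I)
        + pdC (pdC u) t x * Complex.I := by
      calc pdtC u t x = -Complex.I * (Complex.I * pdtC u t x) := by
            rw [← mul_assoc]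
            simp [Complex.I_mul_I]
        _ = -Complex.I * ((n t x : ℂ) * u t x - pdC (pdC u) t x) := by rw [h3]
        _ = _ := by ring
    rw [h2]
    simp only [Complex.mul_re, Complex.mul_im, Complex.add_re, Complex.add_im,
      Complex.I_re, Complex.I_im, Complex.neg_re, Complex.neg_im,
      Complex.conj_re, Complex.conj_im, Complex.ofReal_re, Complex.ofReal_im]
    ring
  -- integrability of the two halves of F' t
  have hQ1int : Integrable (fun x : ℝ => deriv φ ((x + μ t) / lam t)
      * ((deriv μ t * lam t - (x + μ t) * deriv lam t) / lam t ^ 2) * ‖u t x‖ ^ 2) := by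
    apply integrable_of_decay_s13 (C0 := Cp1*(A*(C0*C0) + B*(C1*C0)))
      (C2 := Cp1*(A*(C2*C0) + B*(C3*C0)))
    · exact ((hφ'c.comp ((continuous_id.add continuous_const).div_const _)).mul
        (((continuous_const.mul continuous_const).sub
          ((continuous_id.add continuous_const).mul continuous_const)).div_const _)).mul
        (((hcus t).norm).pow 2)
    · intro x
      have hq' := hq t htmem x
      have b0 := hC0 t x hsTt
      have b1 := hC1 t x hsTt
      have hun : (0:ℝ) ≤ ‖u t x‖ := norm_nonneg _
      rw [Real.norm_eq_abs, abs_mul, abs_mul,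
        abs_of_nonneg (by positivity : (0:ℝ) ≤ ‖u t x‖^2)]
      have e1 : |deriv φ ((x + μ t) / lam t)|
          * |(deriv μ t * lam t - (x + μ t) * deriv lam t) / lam t ^ 2|
          ≤ Cp1 * (A + B * |x|) := mul_le_mul (hφ1 _) hq' (abs_nonneg _) hCp1n
      have m1 : ‖u t x‖ * ‖u t x‖ ≤ C0 * C0 := mul_le_mul b0 b0 hun hC0n
      have m2 : |x| * (‖u t x‖ * ‖u t x‖) ≤ C1 * C0 := by
        calc |x| * (‖u t x‖ * ‖u t x‖) = (|x| * ‖u t x‖) * ‖u t x‖ := by ring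
          _ ≤ C1 * C0 := mul_le_mul b1 b0 hun hC1n
      have e2 : (A + B * |x|) * ‖u t x‖^2 ≤ A*(C0*C0) + B*(C1*C0) := by
        calc (A + B * |x|) * ‖u t x‖^2
            = A*(‖u t x‖ * ‖u t x‖) + B*(|x| * (‖u t x‖ * ‖u t x‖)) := by ring
          _ ≤ A*(C0*C0) + B*(C1*C0) :=
              add_le_add (mul_le_mul_of_nonneg_left m1 hAn)
                (mul_le_mul_of_nonneg_left m2 hBn)
      calc |deriv φ ((x + μ t) / lam t)|
          * |(deriv μ t * lam t - (x + μ t) * deriv lam t) / lam t ^ 2| * ‖u t x‖^2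
          ≤ Cp1 * (A + B * |x|) * ‖u t x‖^2 :=
            mul_le_mul_of_nonneg_right e1 (by positivity)
        _ = Cp1 * ((A + B * |x|) * ‖u t x‖^2) := by ring
        _ ≤ Cp1*(A*(C0*C0) + B*(C1*C0)) := mul_le_mul_of_nonneg_left e2 hCp1n
    · intro x
      have hq' := hq t htmem x
      have b0 := hC0 t x hsTt
      have b2 := hC2 t x hsTt
      have b3 := hC3 t x hsTt
      have hun : (0:ℝ) ≤ ‖u t x‖ := norm_nonneg _
      rw [Real.norm_eq_abs, abs_mul, abs_mul,
        abs_of_nonneg (by positivity : (0:ℝ) ≤ ‖u t x‖^2)]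
      have e1 : |deriv φ ((x + μ t) / lam t)|
          * |(deriv μ t * lam t - (x + μ t) * deriv lam t) / lam t ^ 2|
          ≤ Cp1 * (A + B * |x|) := mul_le_mul (hφ1 _) hq' (abs_nonneg _) hCp1n
      have e2 : x^2 * ((A + B * |x|) * ‖u t x‖^2) ≤ A*(C2*C0) + B*(C3*C0) := by
        have hx2 : |x|^2 = x^2 := sq_abs x
        have m3 : x^2 * (‖u t x‖ * ‖u t x‖) ≤ C2 * C0 := by
          calc x^2 * (‖u t x‖ * ‖u t x‖) = (|x|^2 * ‖u t x‖) * ‖u t x‖ := by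
                rw [hx2]; ring
            _ ≤ C2 * C0 := mul_le_mul b2 b0 hun hC2n
        have m4 : x^2 * |x| * (‖u t x‖ * ‖u t x‖) ≤ C3 * C0 := by
          calc x^2 * |x| * (‖u t x‖ * ‖u t x‖) = (|x|^3 * ‖u t x‖) * ‖u t x‖ := by
                rw [← hx2]; ring
            _ ≤ C3 * C0 := mul_le_mul b3 b0 hun hC3n
        calc x^2 * ((A + B * |x|) * ‖u t x‖^2)
            = A*(x^2 * (‖u t x‖ * ‖u t x‖)) + B*(x^2 * |x| * (‖u t x‖ * ‖u t x‖)) := by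
              ring
          _ ≤ A*(C2*C0) + B*(C3*C0) :=
              add_le_add (mul_le_mul_of_nonneg_left m3 hAn)
                (mul_le_mul_of_nonneg_left m4 hBn)
      calc x^2 * (|deriv φ ((x + μ t) / lam t)|
            * |(deriv μ t * lam t - (x + μ t) * deriv lam t) / lam t ^ 2| * ‖u t x‖^2)
          ≤ x^2 * (Cp1 * (A + B * |x|) * ‖u t x‖^2) := by
            apply mul_le_mul_of_nonneg_left
              (mul_le_mul_of_nonneg_right e1 (by positivity)) (by positivity)
        _ = Cp1 * (x^2 * ((A + B * |x|) * ‖u t x‖^2)) := by ring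
        _ ≤ Cp1*(A*(C2*C0) + B*(C3*C0)) := mul_le_mul_of_nonneg_left e2 hCp1n
  have hQ2int : Integrable (fun x : ℝ => φ ((x + μ t) / lam t)
      * (2 * ((starRingEnd ℂ) (u t x) * pdtC u t x).re)) := by
    apply integrable_of_decay_s13 (C0 := Cp0*(2*(C0*D0))) (C2 := Cp0*(2*(C2*D0)))
    · exact (hφc.comp ((continuous_id.add continuous_const).div_const _)).mul
        (continuous_const.mul (Complex.continuous_re.comp
          ((Complex.continuous_conj.comp (hcus t)).mul (hcut t))))
    · intro x
      have b0 := hC0 t x hsTt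
      have d0 := hD0 t x hsTt
      rw [Real.norm_eq_abs, abs_mul]
      apply mul_le_mul (hφ0 _) ?_ (abs_nonneg _) hCp0n
      rw [abs_mul, abs_two]
      apply mul_le_mul_of_nonneg_left ?_ (by norm_num)
      calc |((starRingEnd ℂ) (u t x) * pdtC u t x).re|
          ≤ ‖(starRingEnd ℂ) (u t x) * pdtC u t x‖ := hre_le _
        _ = ‖u t x‖ * ‖pdtC u t x‖ := habs3 _ _
        _ ≤ C0 * D0 := mul_le_mul b0 d0 (norm_nonneg _) hC0n
    · intro x
      have b2 := hC2 t x hsTt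
      have d0 := hD0 t x hsTt
      rw [Real.norm_eq_abs, abs_mul]
      calc x^2 * (|φ ((x + μ t) / lam t)|
            * |2 * ((starRingEnd ℂ) (u t x) * pdtC u t x).re|)
          = |φ ((x + μ t) / lam t)|
            * (x^2 * |2 * ((starRingEnd ℂ) (u t x) * pdtC u t x).re|) := by ring
        _ ≤ Cp0 * (2*(C2*D0)) := by
            apply mul_le_mul (hφ0 _) ?_ (by positivity) hCp0n
            rw [abs_mul, abs_two]
            calc x^2 * (2 * |((starRingEnd ℂ) (u t x) * pdtC u t x).re|)
                = 2 * (x^2 * |((starRingEnd ℂ) (u t x) * pdtC u t x).re|) := by ring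
              _ ≤ 2*(C2*D0) := by
                  apply mul_le_mul_of_nonneg_left ?_ (by norm_num)
                  calc x^2 * |((starRingEnd ℂ) (u t x) * pdtC u t x).re|
                      ≤ x^2 * (‖u t x‖ * ‖pdtC u t x‖) := by
                        apply mul_le_mul_of_nonneg_left ?_ (by positivity)
                        rw [← habs3]
                        exact hre_le _
                    _ = (|x|^2 * ‖u t x‖) * ‖pdtC u t x‖ := by rw [sq_abs]; ring
                    _ ≤ C2*D0 := mul_le_mul b2 d0 (norm_nonneg _) hC2n
  -- monomial bounds at time t
  have mm1 : ∀ x : ℝ, ‖u t x‖ * ‖u t x‖ ≤ C0*C0 := fun x =>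
    mul_le_mul (hC0 t x hsTt) (hC0 t x hsTt) (norm_nonneg _) hC0n
  have mm2 : ∀ x : ℝ, |x| * (‖u t x‖ * ‖u t x‖) ≤ C1*C0 := fun x => by
    calc |x| * (‖u t x‖ * ‖u t x‖) = (|x| * ‖u t x‖) * ‖u t x‖ := by ring
      _ ≤ C1*C0 := mul_le_mul (hC1 t x hsTt) (hC0 t x hsTt) (norm_nonneg _) hC1n
  have mm3 : ∀ x : ℝ, x^2 * (‖u t x‖ * ‖u t x‖) ≤ C2*C0 := fun x => by
    calc x^2 * (‖u t x‖ * ‖u t x‖) = (|x|^2 * ‖u t x‖) * ‖u t x‖ := by rw [sq_abs]; ring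
      _ ≤ C2*C0 := mul_le_mul (hC2 t x hsTt) (hC0 t x hsTt) (norm_nonneg _) hC2n
  have mm4 : ∀ x : ℝ, x^2 * |x| * (‖u t x‖ * ‖u t x‖) ≤ C3*C0 := fun x => by
    calc x^2 * |x| * (‖u t x‖ * ‖u t x‖) = (|x|^3 * ‖u t x‖) * ‖u t x‖ := by
          rw [← sq_abs]; ring
      _ ≤ C3*C0 := mul_le_mul (hC3 t x hsTt) (hC0 t x hsTt) (norm_nonneg _) hC3n
  have mmUE : ∀ x : ℝ, ‖u t x‖ * ‖pdC u t x‖ ≤ C0*E0 := fun x =>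
    mul_le_mul (hC0 t x hsTt) (hE0 t x hsTt) (norm_nonneg _) hC0n
  have mmUE2 : ∀ x : ℝ, x^2 * (‖u t x‖ * ‖pdC u t x‖) ≤ C2*E0 := fun x => by
    calc x^2 * (‖u t x‖ * ‖pdC u t x‖) = (|x|^2 * ‖u t x‖) * ‖pdC u t x‖ := by
          rw [sq_abs]; ring
      _ ≤ C2*E0 := mul_le_mul (hC2 t x hsTt) (hE0 t x hsTt) (norm_nonneg _) hC2n
  have mmUEx : ∀ x : ℝ, |x| * (‖u t x‖ * ‖pdC u t x‖) ≤ C1*E0 := fun x => by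
    calc |x| * (‖u t x‖ * ‖pdC u t x‖) = (|x| * ‖u t x‖) * ‖pdC u t x‖ := by ring
      _ ≤ C1*E0 := mul_le_mul (hC1 t x hsTt) (hE0 t x hsTt) (norm_nonneg _) hC1n
  have mmEE : ∀ x : ℝ, ‖pdC u t x‖ * ‖pdC u t x‖ ≤ E0*E0 := fun x =>
    mul_le_mul (hE0 t x hsTt) (hE0 t x hsTt) (norm_nonneg _) hE0n
  have mmEE2 : ∀ x : ℝ, x^2 * (‖pdC u t x‖ * ‖pdC u t x‖) ≤ E2*E0 := fun x => by
    calc x^2 * (‖pdC u t x‖ * ‖pdC u t x‖) = (|x|^2 * ‖pdC u t x‖) * ‖pdC u t x‖ := by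
          rw [sq_abs]; ring
      _ ≤ E2*E0 := mul_le_mul (hE2 t x hsTt) (hE0 t x hsTt) (norm_nonneg _) hE2n
  have mmUG : ∀ x : ℝ, ‖u t x‖ * ‖pdC (pdC u) t x‖ ≤ C0*G0 := fun x =>
    mul_le_mul (hC0 t x hsTt) (hG0 t x hsTt) (norm_nonneg _) hC0n
  have mmUG2 : ∀ x : ℝ, x^2 * (‖u t x‖ * ‖pdC (pdC u) t x‖) ≤ C2*G0 := fun x => by
    calc x^2 * (‖u t x‖ * ‖pdC (pdC u) t x‖) = (|x|^2 * ‖u t x‖) * ‖pdC (pdC u) t x‖ := by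
          rw [sq_abs]; ring
      _ ≤ C2*G0 := mul_le_mul (hC2 t x hsTt) (hG0 t x hsTt) (norm_nonneg _) hC2n
  -- integrability of the two pieces appearing in the statement
  have hg1int : Integrable (fun x : ℝ => deriv φ ((x + μ t) / lam t) * ‖u t x‖ ^ 2) := by
    apply integrable_of_decay_s13 (C0 := Cp1*(C0*C0)) (C2 := Cp1*(C2*C0))
    · exact (hφ'c.comp ((continuous_id.add continuous_const).div_const _)).mul
        (((hcus t).norm).pow 2)
    · intro x
      rw [Real.norm_eq_abs, abs_mul, abs_of_nonneg (by positivity : (0:ℝ) ≤ ‖u t x‖^2)]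
      have h9 : ‖u t x‖^2 ≤ C0*C0 := by rw [pow_two]; exact mm1 x
      exact mul_le_mul (hφ1 _) h9 (by positivity) hCp1n
    · intro x
      rw [Real.norm_eq_abs, abs_mul, abs_of_nonneg (by positivity : (0:ℝ) ≤ ‖u t x‖^2)]
      calc x^2 * (|deriv φ ((x + μ t) / lam t)| * ‖u t x‖^2)
          = |deriv φ ((x + μ t) / lam t)| * (x^2 * (‖u t x‖ * ‖u t x‖)) := by
            rw [pow_two]; ring
        _ ≤ Cp1 * (C2*C0) := mul_le_mul (hφ1 _) (mm3 x) (by positivity) hCp1n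
  have hxi : ∀ x : ℝ, |(x + μ t) / lam t| ≤ (|x| + Mm) * (1 / lam t) := by
    intro x
    rw [abs_div, abs_of_pos (hlampos t)]
    calc |x + μ t| / lam t ≤ (|x| + Mm) / lam t :=
          (div_le_div_iff_of_pos_right (hlampos t)).mpr (hxmu x)
      _ = (|x| + Mm) * (1 / lam t) := by ring
  have hMmL : (0:ℝ) ≤ (|0| + Mm) * (1 / lam t) := by positivity
  have hg2int : Integrable (fun x : ℝ => deriv φ ((x + μ t) / lam t)
      * ((x + μ t) / lam t) * ‖u t x‖ ^ 2) := by
    apply integrable_of_decay_s13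
      (C0 := Cp1*(1/lam t)*(C1*C0) + Cp1*(1/lam t)*(Mm*(C0*C0)))
      (C2 := Cp1*(1/lam t)*(C3*C0) + Cp1*(1/lam t)*(Mm*(C2*C0)))
    · exact ((hφ'c.comp ((continuous_id.add continuous_const).div_const _)).mul
        ((continuous_id.add continuous_const).div_const _)).mul
        (((hcus t).norm).pow 2)
    · intro x
      rw [Real.norm_eq_abs, abs_mul, abs_mul,
        abs_of_nonneg (by positivity : (0:ℝ) ≤ ‖u t x‖^2)]
      have e1 : |deriv φ ((x + μ t) / lam t)| * |(x + μ t) / lam t|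
          ≤ Cp1 * ((|x| + Mm) * (1 / lam t)) :=
        mul_le_mul (hφ1 _) (hxi x) (abs_nonneg _) hCp1n
      calc |deriv φ ((x + μ t) / lam t)| * |(x + μ t) / lam t| * ‖u t x‖^2
          ≤ Cp1 * ((|x| + Mm) * (1 / lam t)) * ‖u t x‖^2 :=
            mul_le_mul_of_nonneg_right e1 (by positivity)
        _ = Cp1*(1/lam t)*(|x| * (‖u t x‖ * ‖u t x‖))
            + Cp1*(1/lam t)*(Mm*(‖u t x‖ * ‖u t x‖)) := by rw [pow_two]; ring
        _ ≤ Cp1*(1/lam t)*(C1*C0) + Cp1*(1/lam t)*(Mm*(C0*C0)) := by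
            apply add_le_add
            · exact mul_le_mul_of_nonneg_left (mm2 x) (mul_nonneg hCp1n hLn)
            · exact mul_le_mul_of_nonneg_left
                (mul_le_mul_of_nonneg_left (mm1 x) hMmn) (mul_nonneg hCp1n hLn)
    · intro x
      rw [Real.norm_eq_abs, abs_mul, abs_mul,
        abs_of_nonneg (by positivity : (0:ℝ) ≤ ‖u t x‖^2)]
      have e1 : |deriv φ ((x + μ t) / lam t)| * |(x + μ t) / lam t|
          ≤ Cp1 * ((|x| + Mm) * (1 / lam t)) :=
        mul_le_mul (hφ1 _) (hxi x) (abs_nonneg _) hCp1n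
      calc x^2 * (|deriv φ ((x + μ t) / lam t)| * |(x + μ t) / lam t| * ‖u t x‖^2)
          ≤ x^2 * (Cp1 * ((|x| + Mm) * (1 / lam t)) * ‖u t x‖^2) := by
            apply mul_le_mul_of_nonneg_left
              (mul_le_mul_of_nonneg_right e1 (by positivity)) (by positivity)
        _ = Cp1*(1/lam t)*(x^2 * |x| * (‖u t x‖ * ‖u t x‖))
            + Cp1*(1/lam t)*(Mm*(x^2 * (‖u t x‖ * ‖u t x‖))) := by rw [pow_two]; ring
        _ ≤ Cp1*(1/lam t)*(C3*C0) + Cp1*(1/lam t)*(Mm*(C2*C0)) := by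
            apply add_le_add
            · exact mul_le_mul_of_nonneg_left (mm4 x) (mul_nonneg hCp1n hLn)
            · exact mul_le_mul_of_nonneg_left
                (mul_le_mul_of_nonneg_left (mm3 x) hMmn) (mul_nonneg hCp1n hLn)
  -- split the Q1 integral
  have hQ1 : (∫ x : ℝ, deriv φ ((x + μ t) / lam t)
        * ((deriv μ t * lam t - (x + μ t) * deriv lam t) / lam t ^ 2) * ‖u t x‖ ^ 2)
      = (deriv μ t / lam t) * (∫ x : ℝ, deriv φ ((x + μ t) / lam t) * ‖u t x‖ ^ 2)
        - (deriv lam t / lam t) * (∫ x : ℝ, deriv φ ((x + μ t) / lam t)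
            * ((x + μ t) / lam t) * ‖u t x‖ ^ 2) := by
    rw [← integral_const_mul, ← integral_const_mul,
      ← integral_sub (hg1int.const_mul _) (hg2int.const_mul _)]
    congr 1
    funext x
    field_simp
  -- integration by parts machinery
  have hψd : ∀ x : ℝ, HasDerivAt (fun y => φ ((y + μ t) / lam t))
      (deriv φ ((x + μ t) / lam t) * (1 / lam t)) x := by
    intro x
    have hin : HasDerivAt (fun y : ℝ => (y + μ t) / lam t) (1 / lam t) x := by
      simpa using ((hasDerivAt_id x).add_const (μ t)).div_const (lam t)
    exact (hφd _).comp x hin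
  have hgd : ∀ x : ℝ, HasDerivAt
      (fun y => (↑(φ ((y + μ t) / lam t)) : ℂ) * ((starRingEnd ℂ) (u t y) * pdC u t y))
      ((↑(deriv φ ((x + μ t) / lam t) * (1 / lam t)) : ℂ)
          * ((starRingEnd ℂ) (u t x) * pdC u t x)
        + (↑(φ ((x + μ t) / lam t)) : ℂ)
          * ((starRingEnd ℂ) (pdC u t x) * pdC u t x
            + (starRingEnd ℂ) (u t x) * pdC (pdC u) t x)) x := by
    intro x
    have h1 : HasDerivAt (fun y => (↑(φ ((y + μ t) / lam t)) : ℂ))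
        (↑(deriv φ ((x + μ t) / lam t) * (1 / lam t)) : ℂ) x := (hψd x).ofReal_comp
    have h2 : HasDerivAt (fun y => (starRingEnd ℂ) (u t y))
        ((starRingEnd ℂ) (pdC u t x)) x := by
      simpa only [starRingEnd_apply] using (hux t x).star
    exact h1.mul (h2.mul (huxx t x))
  have hg'int : Integrable (fun x : ℝ =>
      (↑(deriv φ ((x + μ t) / lam t) * (1 / lam t)) : ℂ)
          * ((starRingEnd ℂ) (u t x) * pdC u t x)
        + (↑(φ ((x + μ t) / lam t)) : ℂ)
          * ((starRingEnd ℂ) (pdC u t x) * pdC u t x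
            + (starRingEnd ℂ) (u t x) * pdC (pdC u) t x)) := by
    apply integrable_of_decay_s13
      (C0 := Cp1*(1/lam t)*(C0*E0) + Cp0*(E0*E0 + C0*G0))
      (C2 := Cp1*(1/lam t)*(C2*E0) + Cp0*(E2*E0 + C2*G0))
    · apply Continuous.add
      · exact (Complex.continuous_ofReal.comp
          ((hφ'c.comp ((continuous_id.add continuous_const).div_const _)).mul
            continuous_const)).mul
          ((Complex.continuous_conj.comp (hcus t)).mul (hcux t))
      · exact (Complex.continuous_ofReal.comp
          (hφc.comp ((continuous_id.add continuous_const).div_const _))).mul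
          (((Complex.continuous_conj.comp (hcux t)).mul (hcux t)).add
            ((Complex.continuous_conj.comp (hcus t)).mul (hcuxx t)))
    · intro x
      have h1 : ‖(↑(deriv φ ((x + μ t) / lam t) * (1 / lam t)) : ℂ)
          * ((starRingEnd ℂ) (u t x) * pdC u t x)‖ ≤ Cp1*(1/lam t)*(C0*E0) := by
        rw [norm_mul, Complex.norm_real, habs3, Real.norm_eq_abs, abs_mul,
          abs_of_pos (one_div_pos.mpr (hlampos t))]
        exact mul_le_mul (mul_le_mul_of_nonneg_right (hφ1 _) hLn) (mmUE x)
          (by positivity) (mul_nonneg hCp1n hLn)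
      have h2 : ‖(↑(φ ((x + μ t) / lam t)) : ℂ)
          * ((starRingEnd ℂ) (pdC u t x) * pdC u t x
            + (starRingEnd ℂ) (u t x) * pdC (pdC u) t x)‖ ≤ Cp0*(E0*E0 + C0*G0) := by
        rw [norm_mul, Complex.norm_real, Real.norm_eq_abs]
        apply mul_le_mul (hφ0 _) ?_ (norm_nonneg _) hCp0n
        calc ‖(starRingEnd ℂ) (pdC u t x) * pdC u t x
              + (starRingEnd ℂ) (u t x) * pdC (pdC u) t x‖
            ≤ ‖(starRingEnd ℂ) (pdC u t x) * pdC u t x‖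
              + ‖(starRingEnd ℂ) (u t x) * pdC (pdC u) t x‖ := norm_add_le _ _
          _ = ‖pdC u t x‖ * ‖pdC u t x‖ + ‖u t x‖ * ‖pdC (pdC u) t x‖ := by
              rw [habs3, habs3]
          _ ≤ E0*E0 + C0*G0 := add_le_add (mmEE x) (mmUG x)
      calc ‖_ + _‖ ≤ _ := norm_add_le _ _
        _ ≤ Cp1*(1/lam t)*(C0*E0) + Cp0*(E0*E0 + C0*G0) := add_le_add h1 h2
    · intro x
      have h1 : x^2 * ‖(↑(deriv φ ((x + μ t) / lam t) * (1 / lam t)) : ℂ)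
          * ((starRingEnd ℂ) (u t x) * pdC u t x)‖ ≤ Cp1*(1/lam t)*(C2*E0) := by
        rw [norm_mul, Complex.norm_real, habs3, Real.norm_eq_abs, abs_mul,
          abs_of_pos (one_div_pos.mpr (hlampos t))]
        calc x^2 * (|deriv φ ((x + μ t) / lam t)| * (1/lam t)
              * (‖u t x‖ * ‖pdC u t x‖))
            = (|deriv φ ((x + μ t) / lam t)| * (1/lam t))
              * (x^2 * (‖u t x‖ * ‖pdC u t x‖)) := by ring
          _ ≤ (Cp1 * (1/lam t)) * (C2*E0) :=
              mul_le_mul (mul_le_mul_of_nonneg_right (hφ1 _) hLn) (mmUE2 x)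
                (by positivity) (mul_nonneg hCp1n hLn)
          _ = Cp1*(1/lam t)*(C2*E0) := by ring
      have h2 : x^2 * ‖(↑(φ ((x + μ t) / lam t)) : ℂ)
          * ((starRingEnd ℂ) (pdC u t x) * pdC u t x
            + (starRingEnd ℂ) (u t x) * pdC (pdC u) t x)‖ ≤ Cp0*(E2*E0 + C2*G0) := by
        rw [norm_mul, Complex.norm_real, Real.norm_eq_abs]
        calc x^2 * (|φ ((x + μ t) / lam t)|
              * ‖(starRingEnd ℂ) (pdC u t x) * pdC u t x
                + (starRingEnd ℂ) (u t x) * pdC (pdC u) t x‖)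
            = |φ ((x + μ t) / lam t)|
              * (x^2 * ‖(starRingEnd ℂ) (pdC u t x) * pdC u t x
                + (starRingEnd ℂ) (u t x) * pdC (pdC u) t x‖) := by ring
          _ ≤ Cp0 * (E2*E0 + C2*G0) := by
              apply mul_le_mul (hφ0 _) ?_ (by positivity) hCp0n
              calc x^2 * ‖(starRingEnd ℂ) (pdC u t x) * pdC u t x
                    + (starRingEnd ℂ) (u t x) * pdC (pdC u) t x‖
                  ≤ x^2 * (‖pdC u t x‖ * ‖pdC u t x‖ + ‖u t x‖ * ‖pdC (pdC u) t x‖) := by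
                    apply mul_le_mul_of_nonneg_left ?_ (by positivity)
                    calc ‖(starRingEnd ℂ) (pdC u t x) * pdC u t x
                          + (starRingEnd ℂ) (u t x) * pdC (pdC u) t x‖
                        ≤ ‖(starRingEnd ℂ) (pdC u t x) * pdC u t x‖
                          + ‖(starRingEnd ℂ) (u t x) * pdC (pdC u) t x‖ := norm_add_le _ _
                      _ = ‖pdC u t x‖ * ‖pdC u t x‖ + ‖u t x‖ * ‖pdC (pdC u) t x‖ := by
                          rw [habs3, habs3]
                  _ = x^2 * (‖pdC u t x‖ * ‖pdC u t x‖)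
                      + x^2 * (‖u t x‖ * ‖pdC (pdC u) t x‖) := by ring
                  _ ≤ E2*E0 + C2*G0 := add_le_add (mmEE2 x) (mmUG2 x)
      calc x^2 * ‖_ + _‖ ≤ x^2 * (‖_‖ + ‖_‖) :=
            mul_le_mul_of_nonneg_left (norm_add_le _ _) (by positivity)
        _ = x^2 * ‖_‖ + x^2 * ‖_‖ := by ring
        _ ≤ Cp1*(1/lam t)*(C2*E0) + Cp0*(E2*E0 + C2*G0) := add_le_add h1 h2
  have hgdecay : ∀ x : ℝ, |x| * ‖(↑(φ ((x + μ t) / lam t)) : ℂ)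
      * ((starRingEnd ℂ) (u t x) * pdC u t x)‖ ≤ Cp0 * (C1*E0) := by
    intro x
    rw [norm_mul, Complex.norm_real, habs3, Real.norm_eq_abs]
    calc |x| * (|φ ((x + μ t) / lam t)| * (‖u t x‖ * ‖pdC u t x‖))
        = |φ ((x + μ t) / lam t)| * (|x| * (‖u t x‖ * ‖pdC u t x‖)) := by ring
      _ ≤ Cp0 * (C1*E0) := mul_le_mul (hφ0 _) (mmUEx x) (by positivity) hCp0n
  obtain ⟨htt, htb⟩ := tendsto_zero_of_decay hgdecay
  have hzero := integral_deriv_eq_zero' hgd hg'int htt htb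
  -- imaginary-part integrands
  have hp1int : Integrable (fun x : ℝ => deriv φ ((x + μ t) / lam t) * (1 / lam t)
      * ((starRingEnd ℂ) (u t x) * pdC u t x).im) := by
    apply integrable_of_decay_s13 (C0 := Cp1*(1/lam t)*(C0*E0)) (C2 := Cp1*(1/lam t)*(C2*E0))
    · exact ((hφ'c.comp ((continuous_id.add continuous_const).div_const _)).mul
        continuous_const).mul (Complex.continuous_im.comp
          ((Complex.continuous_conj.comp (hcus t)).mul (hcux t)))
    · intro x
      rw [Real.norm_eq_abs, abs_mul, abs_mul, abs_of_pos (one_div_pos.mpr (hlampos t))]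
      have him1 : |((starRingEnd ℂ) (u t x) * pdC u t x).im| ≤ C0*E0 :=
        le_trans (by rw [← habs3]; exact him_le _) (mmUE x)
      exact mul_le_mul (mul_le_mul_of_nonneg_right (hφ1 _) hLn) him1
        (abs_nonneg _) (mul_nonneg hCp1n hLn)
    · intro x
      rw [Real.norm_eq_abs, abs_mul, abs_mul, abs_of_pos (one_div_pos.mpr (hlampos t))]
      have him1 : x^2 * |((starRingEnd ℂ) (u t x) * pdC u t x).im| ≤ C2*E0 := by
        calc x^2 * |((starRingEnd ℂ) (u t x) * pdC u t x).im|
            ≤ x^2 * (‖u t x‖ * ‖pdC u t x‖) := by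
              apply mul_le_mul_of_nonneg_left ?_ (by positivity)
              rw [← habs3]; exact him_le _
          _ ≤ C2*E0 := mmUE2 x
      calc x^2 * (|deriv φ ((x + μ t) / lam t)| * (1/lam t)
            * |((starRingEnd ℂ) (u t x) * pdC u t x).im|)
          = (|deriv φ ((x + μ t) / lam t)| * (1/lam t))
            * (x^2 * |((starRingEnd ℂ) (u t x) * pdC u t x).im|) := by ring
        _ ≤ (Cp1 * (1/lam t)) * (C2*E0) :=
            mul_le_mul (mul_le_mul_of_nonneg_right (hφ1 _) hLn) him1
              (by positivity) (mul_nonneg hCp1n hLn)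
        _ = Cp1*(1/lam t)*(C2*E0) := by ring
  have hp2int : Integrable (fun x : ℝ => φ ((x + μ t) / lam t)
      * ((starRingEnd ℂ) (u t x) * pdC (pdC u) t x).im) := by
    apply integrable_of_decay_s13 (C0 := Cp0*(C0*G0)) (C2 := Cp0*(C2*G0))
    · exact (hφc.comp ((continuous_id.add continuous_const).div_const _)).mul
        (Complex.continuous_im.comp
          ((Complex.continuous_conj.comp (hcus t)).mul (hcuxx t)))
    · intro x
      rw [Real.norm_eq_abs, abs_mul]
      have him1 : |((starRingEnd ℂ) (u t x) * pdC (pdC u) t x).im| ≤ C0*G0 :=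
        le_trans (by rw [← habs3]; exact him_le _) (mmUG x)
      exact mul_le_mul (hφ0 _) him1 (abs_nonneg _) hCp0n
    · intro x
      rw [Real.norm_eq_abs, abs_mul]
      have him1 : x^2 * |((starRingEnd ℂ) (u t x) * pdC (pdC u) t x).im| ≤ C2*G0 := by
        calc x^2 * |((starRingEnd ℂ) (u t x) * pdC (pdC u) t x).im|
            ≤ x^2 * (‖u t x‖ * ‖pdC (pdC u) t x‖) := by
              apply mul_le_mul_of_nonneg_left ?_ (by positivity)
              rw [← habs3]; exact him_le _
          _ ≤ C2*G0 := mmUG2 x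
      calc x^2 * (|φ ((x + μ t) / lam t)|
            * |((starRingEnd ℂ) (u t x) * pdC (pdC u) t x).im|)
          = |φ ((x + μ t) / lam t)|
            * (x^2 * |((starRingEnd ℂ) (u t x) * pdC (pdC u) t x).im|) := by ring
        _ ≤ Cp0 * (C2*G0) := mul_le_mul (hφ0 _) him1 (by positivity) hCp0n
  have hcplxint : Integrable (fun x : ℝ => (↑(deriv φ ((x + μ t) / lam t)) : ℂ)
      * ((starRingEnd ℂ) (u t x) * pdC u t x)) := by
    apply integrable_of_decay_s13 (C0 := Cp1*(C0*E0)) (C2 := Cp1*(C2*E0))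
    · exact (Complex.continuous_ofReal.comp
        (hφ'c.comp ((continuous_id.add continuous_const).div_const _))).mul
        ((Complex.continuous_conj.comp (hcus t)).mul (hcux t))
    · intro x
      rw [norm_mul, Complex.norm_real, habs3, Real.norm_eq_abs]
      exact mul_le_mul (hφ1 _) (mmUE x) (by positivity) hCp1n
    · intro x
      rw [norm_mul, Complex.norm_real, habs3, Real.norm_eq_abs]
      calc x^2 * (|deriv φ ((x + μ t) / lam t)| * (‖u t x‖ * ‖pdC u t x‖))
          = |deriv φ ((x + μ t) / lam t)| * (x^2 * (‖u t x‖ * ‖pdC u t x‖)) := by ring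
        _ ≤ Cp1 * (C2*E0) := mul_le_mul (hφ1 _) (mmUE2 x) (by positivity) hCp1n
  -- take imaginary part of the vanishing integral
  have h5 : (∫ x : ℝ, (deriv φ ((x + μ t) / lam t) * (1 / lam t)
        * ((starRingEnd ℂ) (u t x) * pdC u t x).im
      + φ ((x + μ t) / lam t)
        * ((starRingEnd ℂ) (u t x) * pdC (pdC u) t x).im)) = 0 := by
    have h6 := integral_im (μ := volume) hg'int
    rw [hzero] at h6
    have h7 : (fun x : ℝ => RCLike.im
        ((↑(deriv φ ((x + μ t) / lam t) * (1 / lam t)) : ℂ)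
          * ((starRingEnd ℂ) (u t x) * pdC u t x)
        + (↑(φ ((x + μ t) / lam t)) : ℂ)
          * ((starRingEnd ℂ) (pdC u t x) * pdC u t x
            + (starRingEnd ℂ) (u t x) * pdC (pdC u) t x)))
        = fun x : ℝ => deriv φ ((x + μ t) / lam t) * (1 / lam t)
            * ((starRingEnd ℂ) (u t x) * pdC u t x).im
          + φ ((x + μ t) / lam t)
            * ((starRingEnd ℂ) (u t x) * pdC (pdC u) t x).im := by
      funext x
      simp only [RCLike.im_to_complex, Complex.add_im, Complex.mul_im,
        Complex.ofReal_re, Complex.ofReal_im, Complex.mul_re,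
        Complex.conj_re, Complex.conj_im]
      ring
    rw [h7] at h6
    simpa using h6
  have h8 := integral_add hp1int hp2int
  rw [h5] at h8
  -- value of ∫ p2
  have h9 : (∫ x : ℝ, deriv φ ((x + μ t) / lam t) * (1 / lam t)
      * ((starRingEnd ℂ) (u t x) * pdC u t x).im)
      = (1 / lam t) * ∫ x : ℝ, deriv φ ((x + μ t) / lam t)
        * ((starRingEnd ℂ) (u t x) * pdC u t x).im := by
    rw [← integral_const_mul]
    congr 1
    funext x
    ring
  have e2 : (∫ x : ℝ, (↑(deriv φ ((x + μ t) / lam t)) : ℂ)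
      * ((starRingEnd ℂ) (u t x) * pdC u t x)).im
      = ∫ x : ℝ, deriv φ ((x + μ t) / lam t)
        * ((starRingEnd ℂ) (u t x) * pdC u t x).im := by
    have h10 := integral_im (μ := volume) hcplxint
    simp only [RCLike.im_to_complex] at h10
    rw [← h10]
    congr 1
    funext x
    simp [Complex.mul_im]
  have hp2val : (∫ x : ℝ, φ ((x + μ t) / lam t)
      * ((starRingEnd ℂ) (u t x) * pdC (pdC u) t x).im)
      = -((1 / lam t) * (∫ x : ℝ, (↑(deriv φ ((x + μ t) / lam t)) : ℂ)
        * ((starRingEnd ℂ) (u t x) * pdC u t x)).im) := by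
    rw [e2]
    rw [h9] at h8
    linarith [h8]
  -- value of ∫ Q2
  have hQ2val : (∫ x : ℝ, φ ((x + μ t) / lam t)
      * (2 * ((starRingEnd ℂ) (u t x) * pdtC u t x).re))
      = 2 * ((1 / lam t) * (∫ x : ℝ, (↑(deriv φ ((x + μ t) / lam t)) : ℂ)
        * ((starRingEnd ℂ) (u t x) * pdC u t x)).im) := by
    have e1 : (fun x : ℝ => φ ((x + μ t) / lam t)
        * (2 * ((starRingEnd ℂ) (u t x) * pdtC u t x).re))
        = fun x : ℝ => (2:ℝ) * -(φ ((x + μ t) / lam t)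
          * ((starRingEnd ℂ) (u t x) * pdC (pdC u) t x).im) := by
      funext x
      rw [hpt x]
      ring
    rw [e1, integral_const_mul, integral_neg, hp2val]
    ring
  -- final assembly
  rw [integral_add hQ1int hQ2int, hQ1, hQ2val]
  ring
end
end

section
/- Let (u,n,v) be a classical solution of the reduced Klein–Gordon–Zakharov system (KGZSv) such that sup_{t≥0} ‖u(t)‖_{H¹(ℝ)} ≤ ε and sup_{t≥0} ‖∂ₜu(t)‖_{L²(ℝ)} ≤ C for some constants ε, C > 0 (not necessarily small). Then there exists K > 0, depending only on the initial energy E_KG(0), ε and C, such that for all t ≥ 0: ∫_ℝ ( (∂ₜu(t,x))² + (∂ₓu(t,x))² + u(t,x)² + n(t,x)² + v(t,x)² ) dx ≤ K. -/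
open MeasureTheory Filter Real Set

noncomputable section

/-- Classical solution of the reduced Klein–Gordon–Zakharov system (KGZSv):
`uₜₜ - u_xx + u = -n u`, `nₜ + v_x = 0`, `vₜ + (n + u²)_x = 0`. -/
structure IsKGZSolution (u n v : ℝ → ℝ → ℝ) : Prop where
  smooth_u : ContDiff ℝ (⊤ : ℕ∞) fun p : ℝ × ℝ => u p.1 p.2
  smooth_n : ContDiff ℝ (⊤ : ℕ∞) fun p : ℝ × ℝ => n p.1 p.2
  smooth_v : ContDiff ℝ (⊤ : ℕ∞) fun p : ℝ × ℝ => v p.1 p.2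
  schwartz_u : SchwartzLocR u
  schwartz_n : SchwartzLocR n
  schwartz_v : SchwartzLocR v
  eq_u : ∀ t x : ℝ, pdtR (pdtR u) t x - pdR (pdR u) t x + u t x = -(n t x * u t x)
  eq_n : ∀ t x : ℝ, pdtR n t x + pdR v t x = 0
  eq_v : ∀ t x : ℝ, pdtR v t x + pdR (fun s y => n s y + (u s y) ^ 2) t x = 0

open Topology

namespace KGZaux

def unc (f : ℝ → ℝ → ℝ) : ℝ × ℝ → ℝ := fun p => f p.1 p.2

variable {f : ℝ → ℝ → ℝ}

lemma hasDerivAt_x (hf : ContDiff ℝ (⊤ : ℕ∞) (unc f)) (t x : ℝ) :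
    HasDerivAt (fun y => f t y) (fderiv ℝ (unc f) (t, x) (0, 1)) x := by
  have h1 : HasDerivAt (fun y : ℝ => ((t, y) : ℝ × ℝ)) (0, 1) x :=
    (hasDerivAt_const x t).prodMk (hasDerivAt_id x)
  have h2 : HasFDerivAt (unc f) (fderiv ℝ (unc f) (t, x)) (t, x) :=
    (hf.differentiable (by simp) (t, x)).hasFDerivAt
  exact h2.comp_hasDerivAt x h1

lemma hasDerivAt_t (hf : ContDiff ℝ (⊤ : ℕ∞) (unc f)) (t x : ℝ) :
    HasDerivAt (fun s => f s x) (fderiv ℝ (unc f) (t, x) (1, 0)) t := by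
  have h1 : HasDerivAt (fun s : ℝ => ((s, x) : ℝ × ℝ)) (1, 0) t :=
    (hasDerivAt_id t).prodMk (hasDerivAt_const t x)
  have h2 : HasFDerivAt (unc f) (fderiv ℝ (unc f) (t, x)) (t, x) :=
    (hf.differentiable (by simp) (t, x)).hasFDerivAt
  exact h2.comp_hasDerivAt t h1

lemma pdR_eq (hf : ContDiff ℝ (⊤ : ℕ∞) (unc f)) (t x : ℝ) :
    pdR f t x = fderiv ℝ (unc f) (t, x) (0, 1) := (hasDerivAt_x hf t x).deriv

lemma pdtR_eq (hf : ContDiff ℝ (⊤ : ℕ∞) (unc f)) (t x : ℝ) :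
    pdtR f t x = fderiv ℝ (unc f) (t, x) (1, 0) := (hasDerivAt_t hf t x).deriv

lemma contDiff_fderiv_apply (hf : ContDiff ℝ (⊤ : ℕ∞) (unc f)) (w : ℝ × ℝ) :
    ContDiff ℝ (⊤ : ℕ∞) (fun p : ℝ × ℝ => fderiv ℝ (unc f) p w) :=
  (hf.fderiv_right (by simp)).clm_apply contDiff_const

lemma contDiff_unc_pdR (hf : ContDiff ℝ (⊤ : ℕ∞) (unc f)) : ContDiff ℝ (⊤ : ℕ∞) (unc (pdR f)) := by
  have : unc (pdR f) = fun p : ℝ × ℝ => fderiv ℝ (unc f) p (0, 1) := by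
    funext p; exact pdR_eq hf p.1 p.2
  rw [this]; exact contDiff_fderiv_apply hf _

lemma contDiff_unc_pdtR (hf : ContDiff ℝ (⊤ : ℕ∞) (unc f)) : ContDiff ℝ (⊤ : ℕ∞) (unc (pdtR f)) := by
  have : unc (pdtR f) = fun p : ℝ × ℝ => fderiv ℝ (unc f) p (1, 0) := by
    funext p; exact pdtR_eq hf p.1 p.2
  rw [this]; exact contDiff_fderiv_apply hf _

lemma fderiv_eval {A : ℝ × ℝ → (ℝ × ℝ →L[ℝ] ℝ)} {p : ℝ × ℝ}
    (hA : DifferentiableAt ℝ A p) (w v : ℝ × ℝ) :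
    fderiv ℝ (fun q => A q v) p w = fderiv ℝ A p w v := by
  have h : HasFDerivAt (fun q => A q v)
      ((ContinuousLinearMap.apply ℝ ℝ v).comp (fderiv ℝ A p)) p :=
    (ContinuousLinearMap.apply ℝ ℝ v).hasFDerivAt.comp p hA.hasFDerivAt
  rw [h.fderiv]; rfl

/-- Clairaut for our setting. -/
lemma pd_comm (hf : ContDiff ℝ (⊤ : ℕ∞) (unc f)) (t x : ℝ) :
    pdR (pdtR f) t x = pdtR (pdR f) t x := by
  set A := fun p : ℝ × ℝ => fderiv ℝ (unc f) p with hA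
  have hAdiff : Differentiable ℝ A := (hf.fderiv_right (m := (⊤ : ℕ∞)) (by simp)).differentiable (by simp)
  have h1 : pdR (pdtR f) t x = fderiv ℝ A (t, x) (0, 1) (1, 0) := by
    rw [pdR_eq (contDiff_unc_pdtR hf) t x]
    have : unc (pdtR f) = fun p : ℝ × ℝ => A p (1, 0) := by
      funext p; exact pdtR_eq hf p.1 p.2
    rw [this, fderiv_eval (hAdiff (t, x)) _ _]
  have h2 : pdtR (pdR f) t x = fderiv ℝ A (t, x) (1, 0) (0, 1) := by
    rw [pdtR_eq (contDiff_unc_pdR hf) t x]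
    have : unc (pdR f) = fun p : ℝ × ℝ => A p (0, 1) := by
      funext p; exact pdR_eq hf p.1 p.2
    rw [this, fderiv_eval (hAdiff (t, x)) _ _]
  rw [h1, h2]
  exact second_derivative_symmetric (f := unc f)
    (fun y => (hf.differentiable (by simp) y).hasFDerivAt)
    (hAdiff (t, x)).hasFDerivAt _ _



/-- decay in x, uniformly for `|t| ≤ T` -/
def Dec2 (g : ℝ → ℝ → ℝ) (T : ℝ) : Prop :=
  ∃ C : ℝ, ∀ t x : ℝ, |t| ≤ T → (1 + x ^ 2) * |g t x| ≤ C

def Bdd2 (g : ℝ → ℝ → ℝ) (T : ℝ) : Prop :=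
  ∃ C : ℝ, 0 ≤ C ∧ ∀ t x : ℝ, |t| ≤ T → |g t x| ≤ C

variable {g h : ℝ → ℝ → ℝ} {T : ℝ}

lemma Dec2.bdd (hg : Dec2 g T) : Bdd2 g T := by
  obtain ⟨C, hC⟩ := hg
  refine ⟨|C|, abs_nonneg _, fun t x ht => ?_⟩
  have := hC t x ht
  nlinarith [sq_nonneg x, abs_nonneg (g t x), le_abs_self C]

lemma Dec2.add (hg : Dec2 g T) (hh : Dec2 h T) :
    Dec2 (fun t x => g t x + h t x) T := by
  obtain ⟨C1, h1⟩ := hg; obtain ⟨C2, h2⟩ := hh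
  refine ⟨C1 + C2, fun t x ht => ?_⟩
  have := h1 t x ht; have := h2 t x ht
  have := abs_add_le (g t x) (h t x)
  nlinarith [sq_nonneg x, abs_nonneg (g t x), abs_nonneg (h t x)]

lemma Dec2.neg (hg : Dec2 g T) : Dec2 (fun t x => -(g t x)) T := by
  obtain ⟨C, hC⟩ := hg; exact ⟨C, fun t x ht => by simpa using hC t x ht⟩

lemma Dec2.sub (hg : Dec2 g T) (hh : Dec2 h T) :
    Dec2 (fun t x => g t x - h t x) T := by
  have := hg.add hh.neg; simpa [sub_eq_add_neg] using this

lemma Dec2.mul_bdd (hg : Dec2 g T) (hh : Bdd2 h T) :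
    Dec2 (fun t x => g t x * h t x) T := by
  obtain ⟨C1, h1⟩ := hg; obtain ⟨C2, hC2, h2⟩ := hh
  refine ⟨|C1| * C2, fun t x ht => ?_⟩
  have a1 := h1 t x ht; have a2 := h2 t x ht
  have e : (1 + x ^ 2) * |g t x * h t x| = ((1 + x ^ 2) * |g t x|) * |h t x| := by
    rw [abs_mul]; ring
  rw [e]
  have hg0 : 0 ≤ (1 + x ^ 2) * |g t x| := by positivity
  calc ((1 + x ^ 2) * |g t x|) * |h t x| ≤ |C1| * C2 :=
    mul_le_mul (a1.trans (le_abs_self _)) a2 (abs_nonneg _) (abs_nonneg _)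

lemma Dec2.const_mul (hg : Dec2 g T) (c : ℝ) : Dec2 (fun t x => c * g t x) T := by
  obtain ⟨C, hC⟩ := hg
  refine ⟨|c| * C, fun t x ht => ?_⟩
  have := hC t x ht
  rw [abs_mul]
  nlinarith [sq_nonneg x, abs_nonneg (g t x), abs_nonneg c]

lemma Bdd2.mul (hg : Bdd2 g T) (hh : Bdd2 h T) :
    Bdd2 (fun t x => g t x * h t x) T := by
  obtain ⟨C1, hC1, h1⟩ := hg; obtain ⟨C2, hC2, h2⟩ := hh
  refine ⟨C1 * C2, by positivity, fun t x ht => ?_⟩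
  rw [abs_mul]
  exact mul_le_mul (h1 t x ht) (h2 t x ht) (abs_nonneg _) hC1

/-- from Schwartz bounds -/
lemma schwartz_dec2 {f : ℝ → ℝ → ℝ} (hf : SchwartzLocR f) (j l : ℕ) (T : ℝ) :
    Dec2 (pdR^[l] (pdtR^[j] f)) T := by
  obtain ⟨C0, h0⟩ := hf j 0 l T
  obtain ⟨C2, h2⟩ := hf j 2 l T
  refine ⟨C0 + C2, fun t x ht => ?_⟩
  have a0 := h0 t x ht; have a2 := h2 t x ht
  simp only [pow_zero, one_mul] at a0
  have : |x| ^ 2 = x ^ 2 := sq_abs x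
  nlinarith [abs_nonneg (pdR^[l] (pdtR^[j] f) t x)]

/-- fixed-t decay gives integrability -/
lemma integrable_of_dec {w : ℝ → ℝ} {C : ℝ} (hw : Continuous w)
    (h : ∀ x, (1 + x ^ 2) * |w x| ≤ C) : Integrable w := by
  refine (integrable_inv_one_add_sq.const_mul C).mono' hw.aestronglyMeasurable ?_
  refine ae_of_all _ fun x => ?_
  have hx : (0:ℝ) < 1 + x ^ 2 := by positivity
  rw [Real.norm_eq_abs]
  calc |w x| ≤ C / (1 + x ^ 2) := by rw [le_div_iff₀ hx]; linarith [h x]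
    _ = C * (1 + x ^ 2)⁻¹ := by ring

lemma tendsto_zero_of_dec_atTop {w : ℝ → ℝ} {C : ℝ}
    (h : ∀ x, (1 + x ^ 2) * |w x| ≤ C) : Tendsto w atTop (𝓝 0) := by
  refine squeeze_zero_norm (a := fun x : ℝ => C * (1 + x ^ 2)⁻¹) ?_ ?_
  · intro x
    have hx : (0:ℝ) < 1 + x ^ 2 := by positivity
    rw [Real.norm_eq_abs]
    calc |w x| ≤ C / (1 + x ^ 2) := by rw [le_div_iff₀ hx]; linarith [h x]
      _ = C * (1 + x ^ 2)⁻¹ := by ring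
  · have h1 : Tendsto (fun x : ℝ => 1 + x ^ 2) atTop atTop :=
      tendsto_atTop_add_const_left _ 1 (tendsto_pow_atTop (by norm_num))
    simpa using h1.inv_tendsto_atTop.const_mul C

lemma tendsto_zero_of_dec_atBot {w : ℝ → ℝ} {C : ℝ}
    (h : ∀ x, (1 + x ^ 2) * |w x| ≤ C) : Tendsto w atBot (𝓝 0) := by
  have := tendsto_zero_of_dec_atTop (w := fun x => w (-x)) (C := C)
    (fun x => by simpa using h (-x))
  have h2 : Tendsto (fun x : ℝ => -x) atBot atTop := tendsto_neg_atBot_atTop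
  have h3 : ((fun x => w (-x)) ∘ fun x : ℝ => -x) = w := by funext x; simp
  have := this.comp h2
  rwa [h3] at this

end KGZaux


namespace KGZaux

variable {f : ℝ → ℝ → ℝ}

lemma hdt (hg : ContDiff ℝ (⊤ : ℕ∞) (unc f)) (t x : ℝ) :
    HasDerivAt (fun s => f s x) (pdtR f t x) t := by
  rw [pdtR_eq hg]; exact hasDerivAt_t hg t x

lemma hdx (hg : ContDiff ℝ (⊤ : ℕ∞) (unc f)) (t x : ℝ) :
    HasDerivAt (fun y => f t y) (pdR f t x) x := by
  rw [pdR_eq hg]; exact hasDerivAt_x hg t x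

lemma cont_fix (hg : ContDiff ℝ (⊤ : ℕ∞) (unc f)) (t : ℝ) : Continuous fun x => f t x :=
  hg.continuous.comp (continuous_const.prodMk continuous_id)

section Solution

variable {u n v : ℝ → ℝ → ℝ} (hs : IsKGZSolution u n v)

/-- energy integrand -/
def EI (u n v : ℝ → ℝ → ℝ) : ℝ → ℝ → ℝ := fun t x =>
  (u t x) ^ 2 + (pdR u t x) ^ 2 + (pdtR u t x) ^ 2
    + (1/2) * ((n t x) ^ 2 + (v t x) ^ 2) + n t x * (u t x) ^ 2

/-- time derivative of the energy integrand -/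
def DD (u n v : ℝ → ℝ → ℝ) : ℝ → ℝ → ℝ := fun t x =>
  2 * u t x * pdtR u t x + 2 * pdR u t x * pdR (pdtR u) t x
    + 2 * pdtR u t x * pdtR (pdtR u) t x + n t x * pdtR n t x + v t x * pdtR v t x
    + pdtR n t x * (u t x) ^ 2 + 2 * n t x * u t x * pdtR u t x

/-- flux -/
def GG (u n v : ℝ → ℝ → ℝ) : ℝ → ℝ → ℝ := fun t x =>
  2 * pdR u t x * pdtR u t x - n t x * v t x - v t x * (u t x) ^ 2

include hs

lemma rel_uxx : ∀ t x, pdR (pdR u) t x = pdtR (pdtR u) t x + u t x + n t x * u t x := by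
  intro t x; have := hs.eq_u t x; linarith

lemma rel_vx : ∀ t x, pdR v t x = -(pdtR n t x) := by
  intro t x; have := hs.eq_n t x; linarith

lemma rel_nx : ∀ t x, pdR n t x = -(pdtR v t x) - 2 * u t x * pdR u t x := by
  intro t x
  have hsum : pdR (fun s y => n s y + (u s y) ^ 2) t x
      = pdR n t x + 2 * u t x * pdR u t x := by
    have h1 : HasDerivAt (fun y => n t y + (u t y) ^ 2)
        (pdR n t x + (2:ℕ) * (u t x) ^ (2-1) * pdR u t x) x :=
      (hdx hs.smooth_n t x).add ((hdx hs.smooth_u t x).pow 2)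
    have := h1.deriv
    simp only [pdR] at this ⊢
    rw [this]; push_cast; ring
  have := hs.eq_v t x
  rw [hsum] at this
  linarith

lemma hasDerivAt_EI (t x : ℝ) :
    HasDerivAt (fun s => EI u n v s x) (DD u n v t x) t := by
  have hu := hs.smooth_u; have hn := hs.smooth_n; have hv := hs.smooth_v
  have h1 : HasDerivAt (fun s => u s x) (pdtR u t x) t := hdt hu t x
  have h2 : HasDerivAt (fun s => pdR u s x) (pdR (pdtR u) t x) t := by
    rw [pd_comm hu t x]; exact hdt (contDiff_unc_pdR hu) t x
  have h3 : HasDerivAt (fun s => pdtR u s x) (pdtR (pdtR u) t x) t :=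
    hdt (contDiff_unc_pdtR hu) t x
  have h4 : HasDerivAt (fun s => n s x) (pdtR n t x) t := hdt hn t x
  have h5 : HasDerivAt (fun s => v s x) (pdtR v t x) t := hdt hv t x
  have H := ((((h1.pow 2).add (h2.pow 2)).add (h3.pow 2)).add
      (((h4.pow 2).add (h5.pow 2)).const_mul (1/2))).add (h4.mul (h1.pow 2))
  show HasDerivAt (fun s => (u s x) ^ 2 + (pdR u s x) ^ 2 + (pdtR u s x) ^ 2
    + (1/2) * ((n s x) ^ 2 + (v s x) ^ 2) + n s x * (u s x) ^ 2) (DD u n v t x) t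
  refine H.congr_deriv ?_
  simp only [DD, Pi.pow_apply]; push_cast; ring

lemma hasDerivAt_GG (t x : ℝ) :
    HasDerivAt (fun y => GG u n v t y) (DD u n v t x) x := by
  have hu := hs.smooth_u; have hn := hs.smooth_n; have hv := hs.smooth_v
  have h1 : HasDerivAt (fun y => u t y) (pdR u t x) x := hdx hu t x
  have h2 : HasDerivAt (fun y => pdR u t y) (pdR (pdR u) t x) x :=
    hdx (contDiff_unc_pdR hu) t x
  have h3 : HasDerivAt (fun y => pdtR u t y) (pdR (pdtR u) t x) x :=
    hdx (contDiff_unc_pdtR hu) t x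
  have h4 : HasDerivAt (fun y => n t y) (pdR n t x) x := hdx hn t x
  have h5 : HasDerivAt (fun y => v t y) (pdR v t x) x := hdx hv t x
  have H := (((h2.const_mul 2).mul h3).sub (h4.mul h5)).sub (h5.mul (h1.pow 2))
  show HasDerivAt (fun y => 2 * pdR u t y * pdtR u t y - n t y * v t y
    - v t y * (u t y) ^ 2) (DD u n v t x) x
  refine H.congr_deriv ?_
  rw [rel_uxx hs, rel_vx hs, rel_nx hs]
  simp only [DD, Pi.pow_apply]; push_cast; ring

end Solution
end KGZaux

namespace KGZaux

lemma Bdd2.sq {g : ℝ → ℝ → ℝ} {T : ℝ} (hg : Bdd2 g T) :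
    Bdd2 (fun t x => g t x ^ 2) T := by
  have := hg.mul hg; simpa [pow_two] using this

lemma Dec2.sq {g : ℝ → ℝ → ℝ} {T : ℝ} (hg : Dec2 g T) :
    Dec2 (fun t x => g t x ^ 2) T := by
  have := hg.mul_bdd hg.bdd; simpa [pow_two] using this

section Solution2

variable {u n v : ℝ → ℝ → ℝ} (hs : IsKGZSolution u n v)

include hs

lemma dec_u (T : ℝ) : Dec2 u T := by simpa using schwartz_dec2 hs.schwartz_u 0 0 T
lemma dec_ut (T : ℝ) : Dec2 (pdtR u) T := by
  simpa using schwartz_dec2 hs.schwartz_u 1 0 T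
lemma dec_ux (T : ℝ) : Dec2 (pdR u) T := by
  simpa using schwartz_dec2 hs.schwartz_u 0 1 T
lemma dec_uxt (T : ℝ) : Dec2 (pdR (pdtR u)) T := by
  simpa using schwartz_dec2 hs.schwartz_u 1 1 T
lemma dec_utt (T : ℝ) : Dec2 (pdtR (pdtR u)) T := by
  have := schwartz_dec2 hs.schwartz_u 2 0 T
  simpa [Function.iterate_succ, Function.iterate_zero] using this
lemma dec_n (T : ℝ) : Dec2 n T := by simpa using schwartz_dec2 hs.schwartz_n 0 0 T
lemma dec_nt (T : ℝ) : Dec2 (pdtR n) T := by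
  simpa using schwartz_dec2 hs.schwartz_n 1 0 T
lemma dec_v (T : ℝ) : Dec2 v T := by simpa using schwartz_dec2 hs.schwartz_v 0 0 T
lemma dec_vt (T : ℝ) : Dec2 (pdtR v) T := by
  simpa using schwartz_dec2 hs.schwartz_v 1 0 T

lemma dec_DD (T : ℝ) : Dec2 (DD u n v) T := by
  have du := dec_u hs T; have dut := dec_ut hs T; have dux := dec_ux hs T
  have duxt := dec_uxt hs T; have dutt := dec_utt hs T
  have dn := dec_n hs T; have dnt := dec_nt hs T
  have dv := dec_v hs T; have dvt := dec_vt hs T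
  exact (((((((du.const_mul 2).mul_bdd dut.bdd).add
    ((dux.const_mul 2).mul_bdd duxt.bdd)).add
    ((dut.const_mul 2).mul_bdd dutt.bdd)).add
    (dn.mul_bdd dnt.bdd)).add
    (dv.mul_bdd dvt.bdd)).add
    (dnt.mul_bdd du.bdd.sq)).add
    (((dn.const_mul 2).mul_bdd du.bdd).mul_bdd dut.bdd)

lemma dec_GG (T : ℝ) : Dec2 (GG u n v) T := by
  have du := dec_u hs T; have dut := dec_ut hs T; have dux := dec_ux hs T
  have dn := dec_n hs T; have dv := dec_v hs T
  exact (((dux.const_mul 2).mul_bdd dut.bdd).sub (dn.mul_bdd dv.bdd)).sub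
    (dv.mul_bdd du.bdd.sq)

lemma dec_EI (T : ℝ) : Dec2 (EI u n v) T := by
  have du := dec_u hs T; have dut := dec_ut hs T; have dux := dec_ux hs T
  have dn := dec_n hs T; have dv := dec_v hs T
  exact ((((du.sq.add dux.sq).add dut.sq).add
    ((dn.sq.add dv.sq).const_mul (1/2))).add (dn.mul_bdd du.bdd.sq))

omit hs

lemma int_of_dec2 {g : ℝ → ℝ → ℝ} {t : ℝ} (hd : Dec2 g |t|)
    (hc : Continuous fun x => g t x) : Integrable fun x => g t x := by
  obtain ⟨C, hC⟩ := hd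
  exact integrable_of_dec hc fun x => hC t x le_rfl

include hs

lemma cont_DD (t : ℝ) : Continuous fun x => DD u n v t x := by
  have cu := cont_fix hs.smooth_u t
  have cut := cont_fix (contDiff_unc_pdtR hs.smooth_u) t
  have cux := cont_fix (contDiff_unc_pdR hs.smooth_u) t
  have cuxt := cont_fix (contDiff_unc_pdR (contDiff_unc_pdtR hs.smooth_u)) t
  have cutt := cont_fix (contDiff_unc_pdtR (contDiff_unc_pdtR hs.smooth_u)) t
  have cn := cont_fix hs.smooth_n t
  have cnt := cont_fix (contDiff_unc_pdtR hs.smooth_n) t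
  have cv := cont_fix hs.smooth_v t
  have cvt := cont_fix (contDiff_unc_pdtR hs.smooth_v) t
  unfold DD; fun_prop

lemma cont_EI (t : ℝ) : Continuous fun x => EI u n v t x := by
  have cu := cont_fix hs.smooth_u t
  have cut := cont_fix (contDiff_unc_pdtR hs.smooth_u) t
  have cux := cont_fix (contDiff_unc_pdR hs.smooth_u) t
  have cn := cont_fix hs.smooth_n t
  have cv := cont_fix hs.smooth_v t
  unfold EI; fun_prop

lemma integral_DD_zero (t : ℝ) : (∫ x : ℝ, DD u n v t x) = 0 := by
  have hint : Integrable fun x => DD u n v t x :=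
    int_of_dec2 (dec_DD hs |t|) (cont_DD hs t)
  obtain ⟨CG, hCG⟩ := dec_GG hs |t|
  have hTop : Tendsto (fun y => GG u n v t y) atTop (𝓝 0) :=
    tendsto_zero_of_dec_atTop fun x => hCG t x le_rfl
  have hBot : Tendsto (fun y => GG u n v t y) atBot (𝓝 0) :=
    tendsto_zero_of_dec_atBot fun x => hCG t x le_rfl
  have h1 := integral_Ioi_of_hasDerivAt_of_tendsto' (a := 0)
    (f := fun y => GG u n v t y) (f' := fun x => DD u n v t x)
    (fun x _ => hasDerivAt_GG hs t x) hint.integrableOn hTop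
  have h2 := integral_Iic_of_hasDerivAt_of_tendsto' (a := 0)
    (f := fun y => GG u n v t y) (f' := fun x => DD u n v t x)
    (fun x _ => hasDerivAt_GG hs t x) hint.integrableOn hBot
  have h3 := intervalIntegral.integral_Iic_add_Ioi (b := (0:ℝ)) (f := fun x => DD u n v t x)
    (μ := volume) hint.integrableOn hint.integrableOn
  rw [← h3, h1, h2]; ring

lemma EI_const (t : ℝ) : (∫ x : ℝ, EI u n v t x) = ∫ x : ℝ, EI u n v 0 x := by
  have key : ∀ s : ℝ, HasDerivAt (fun r => ∫ x : ℝ, EI u n v r x) 0 s := by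
    intro s
    obtain ⟨CD, hCD⟩ := dec_DD hs (|s| + 1)
    have hT : ∀ r ∈ Metric.ball s 1, |r| ≤ |s| + 1 := by
      intro r hr
      have h1 : |r - s| < 1 := by simpa [Real.dist_eq] using hr
      have h2 : |r| - |s| ≤ |r - s| := abs_sub_abs_le_abs_sub r s
      linarith
    have H := hasDerivAt_integral_of_dominated_loc_of_deriv_le (μ := volume)
      (F := fun r x => EI u n v r x) (F' := fun r x => DD u n v r x) (x₀ := s)
      (bound := fun x => CD * (1 + x ^ 2)⁻¹) (Metric.ball_mem_nhds s one_pos)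
      (Eventually.of_forall fun r => (cont_EI hs r).aestronglyMeasurable)
      (int_of_dec2 (dec_EI hs |s|) (cont_EI hs s))
      ((cont_DD hs s).aestronglyMeasurable)
      (ae_of_all _ fun x r hr => by
        have hx : (0:ℝ) < 1 + x ^ 2 := by positivity
        have := hCD r x (hT r hr)
        rw [Real.norm_eq_abs]
        calc |DD u n v r x| ≤ CD / (1 + x ^ 2) := by
              rw [le_div_iff₀ hx]; linarith
          _ = CD * (1 + x ^ 2)⁻¹ := by ring)
      (integrable_inv_one_add_sq.const_mul CD)
      (ae_of_all _ fun x r _ => hasDerivAt_EI hs r x)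
    have := H.2
    rwa [integral_DD_zero hs s] at this
  exact is_const_of_deriv_eq_zero (fun s => (key s).differentiableAt)
    (fun s => (key s).deriv) t 0

end Solution2
end KGZaux

namespace KGZaux
section Solution3
variable {u n v : ℝ → ℝ → ℝ} (hs : IsKGZSolution u n v)
include hs

lemma per_t (t : ℝ) (ε C : ℝ)
    (hε1 : Real.sqrt (∫ x : ℝ, ((pdR u t x) ^ 2 + (u t x) ^ 2)) ≤ ε)
    (hC1 : Real.sqrt (∫ x : ℝ, (pdtR u t x) ^ 2) ≤ C) :
    ((∫ x : ℝ, ((pdtR u t x) ^ 2 + (pdR u t x) ^ 2 + (u t x) ^ 2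
        + (n t x) ^ 2 + (v t x) ^ 2))
      ≤ C ^ 2 + ε ^ 2 + ((∫ x : ℝ, (n t x) ^ 2) + ∫ x : ℝ, (v t x) ^ 2))
    ∧ (1/4) * ((∫ x : ℝ, (n t x) ^ 2) + ∫ x : ℝ, (v t x) ^ 2) - ε ^ 4
        ≤ ∫ x : ℝ, EI u n v t x := by
  have cu := cont_fix hs.smooth_u t
  have cux := cont_fix (contDiff_unc_pdR hs.smooth_u) t
  have cut := cont_fix (contDiff_unc_pdtR hs.smooth_u) t
  have cn := cont_fix hs.smooth_n t
  have cv := cont_fix hs.smooth_v t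
  have iu2 : Integrable fun x => (u t x) ^ 2 :=
    int_of_dec2 (dec_u hs |t|).sq (cu.pow 2)
  have iux2 : Integrable fun x => (pdR u t x) ^ 2 :=
    int_of_dec2 (dec_ux hs |t|).sq (cux.pow 2)
  have iut2 : Integrable fun x => (pdtR u t x) ^ 2 :=
    int_of_dec2 (dec_ut hs |t|).sq (cut.pow 2)
  have in2 : Integrable fun x => (n t x) ^ 2 :=
    int_of_dec2 (dec_n hs |t|).sq (cn.pow 2)
  have iv2 : Integrable fun x => (v t x) ^ 2 :=
    int_of_dec2 (dec_v hs |t|).sq (cv.pow 2)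
  have inu2 : Integrable fun x => n t x * (u t x) ^ 2 :=
    int_of_dec2 ((dec_n hs |t|).mul_bdd (dec_u hs |t|).bdd.sq) (cn.mul (cu.pow 2))
  have iu4 : Integrable fun x => ((u t x) ^ 2) ^ 2 :=
    int_of_dec2 (dec_u hs |t|).sq.sq ((cu.pow 2).pow 2)
  have i2uux : Integrable fun x => 2 * u t x * pdR u t x :=
    int_of_dec2 (((dec_u hs |t|).const_mul 2).mul_bdd (dec_ux hs |t|).bdd)
      ((continuous_const.mul cu).mul cux)
  have isum : Integrable fun x => (pdR u t x) ^ 2 + (u t x) ^ 2 := iux2.add iu2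
  -- nonnegativity
  have hA : 0 ≤ ∫ x : ℝ, (u t x) ^ 2 := integral_nonneg fun x => by positivity
  have hB : 0 ≤ ∫ x : ℝ, (pdR u t x) ^ 2 := integral_nonneg fun x => by positivity
  have hM : 0 ≤ ∫ x : ℝ, (n t x) ^ 2 := integral_nonneg fun x => by positivity
  have hW : 0 ≤ ∫ x : ℝ, (v t x) ^ 2 := integral_nonneg fun x => by positivity
  have hCc : 0 ≤ ∫ x : ℝ, (pdtR u t x) ^ 2 := integral_nonneg fun x => by positivity
  -- H¹ bound
  have hKnn : 0 ≤ ∫ x : ℝ, ((pdR u t x) ^ 2 + (u t x) ^ 2) :=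
    integral_nonneg fun x => by positivity
  have hK : (∫ x : ℝ, ((pdR u t x) ^ 2 + (u t x) ^ 2)) ≤ ε ^ 2 := by
    nlinarith [Real.sq_sqrt hKnn,
      Real.sqrt_nonneg (∫ x : ℝ, ((pdR u t x) ^ 2 + (u t x) ^ 2))]
  have hKsplit : (∫ x : ℝ, ((pdR u t x) ^ 2 + (u t x) ^ 2))
      = (∫ x : ℝ, (pdR u t x) ^ 2) + ∫ x : ℝ, (u t x) ^ 2 := integral_add iux2 iu2
  -- L² bound for ∂ₜu
  have hCnn : 0 ≤ ∫ x : ℝ, (pdtR u t x) ^ 2 := hCc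
  have hC2 : (∫ x : ℝ, (pdtR u t x) ^ 2) ≤ C ^ 2 := by
    nlinarith [Real.sq_sqrt hCnn, Real.sqrt_nonneg (∫ x : ℝ, (pdtR u t x) ^ 2)]
  -- Sobolev sup bound
  have hsob : ∀ y : ℝ, (u t y) ^ 2 ≤ ∫ x : ℝ, ((pdR u t x) ^ 2 + (u t x) ^ 2) := by
    intro y
    have hd : ∀ z : ℝ, HasDerivAt (fun w => (u t w) ^ 2)
        (2 * u t z * pdR u t z) z := by
      intro z
      have h := (hdx hs.smooth_u t z).pow 2
      refine h.congr_deriv ?_; push_cast; ring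
    obtain ⟨Cu, hCu⟩ := (dec_u hs |t|).sq
    have hTop : Tendsto (fun w => (u t w) ^ 2) atTop (𝓝 0) :=
      tendsto_zero_of_dec_atTop fun x => hCu t x le_rfl
    have h1 := integral_Ioi_of_hasDerivAt_of_tendsto' (a := y)
      (f := fun w => (u t w) ^ 2) (f' := fun x => 2 * u t x * pdR u t x)
      (fun z _ => hd z) i2uux.integrableOn hTop
    have habs : |∫ x in Ioi y, 2 * u t x * pdR u t x|
        ≤ ∫ x in Ioi y, |2 * u t x * pdR u t x| := by
      have := norm_integral_le_integral_norm
        (f := fun x => 2 * u t x * pdR u t x) (μ := volume.restrict (Ioi y))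
      simp only [Real.norm_eq_abs] at this
      exact this
    have hmono : (∫ x in Ioi y, |2 * u t x * pdR u t x|)
        ≤ ∫ x in Ioi y, ((pdR u t x) ^ 2 + (u t x) ^ 2) := by
      refine integral_mono i2uux.abs.integrableOn isum.integrableOn fun x => ?_
      rw [abs_le]
      constructor <;>
        nlinarith [sq_nonneg (u t x + pdR u t x), sq_nonneg (u t x - pdR u t x)]
    have hle : (∫ x in Ioi y, ((pdR u t x) ^ 2 + (u t x) ^ 2))
        ≤ ∫ x : ℝ, ((pdR u t x) ^ 2 + (u t x) ^ 2) :=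
      setIntegral_le_integral isum (ae_of_all _ fun x => by positivity)
    have heq : (u t y) ^ 2 = -(∫ x in Ioi y, 2 * u t x * pdR u t x) := by
      linarith [h1]
    calc (u t y) ^ 2 = -(∫ x in Ioi y, 2 * u t x * pdR u t x) := heq
      _ ≤ |∫ x in Ioi y, 2 * u t x * pdR u t x| := neg_le_abs _
      _ ≤ ∫ x in Ioi y, |2 * u t x * pdR u t x| := habs
      _ ≤ ∫ x in Ioi y, ((pdR u t x) ^ 2 + (u t x) ^ 2) := hmono
      _ ≤ ∫ x : ℝ, ((pdR u t x) ^ 2 + (u t x) ^ 2) := hle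
  -- bound on ∫ u⁴
  have hR : (∫ x : ℝ, ((u t x) ^ 2) ^ 2)
      ≤ (∫ x : ℝ, ((pdR u t x) ^ 2 + (u t x) ^ 2)) * ∫ x : ℝ, (u t x) ^ 2 := by
    have iconst : Integrable fun x =>
        (∫ x' : ℝ, ((pdR u t x') ^ 2 + (u t x') ^ 2)) * (u t x) ^ 2 :=
      iu2.const_mul _
    have := integral_mono iu4 iconst
      (fun x => by
        show ((u t x) ^ 2) ^ 2 ≤ (∫ x' : ℝ, ((pdR u t x') ^ 2 + (u t x') ^ 2)) * (u t x) ^ 2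
        nlinarith [hsob x, sq_nonneg (u t x)])
    rwa [integral_const_mul] at this
  have hRnn : 0 ≤ ∫ x : ℝ, ((u t x) ^ 2) ^ 2 :=
    integral_nonneg fun x => by positivity
  have hR4 : (∫ x : ℝ, ((u t x) ^ 2) ^ 2) ≤ ε ^ 4 := by
    have hAe : (∫ x : ℝ, (u t x) ^ 2) ≤ ε ^ 2 := by linarith [hKsplit, hK, hB]
    nlinarith [hR, hK, hKnn, hA]
  -- lower bound on ∫ n u²
  have hQ : -((1/4) * (∫ x : ℝ, (n t x) ^ 2) + ∫ x : ℝ, ((u t x) ^ 2) ^ 2)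
      ≤ ∫ x : ℝ, n t x * (u t x) ^ 2 := by
    have hneg : Integrable fun x => -((1/4) * (n t x) ^ 2 + ((u t x) ^ 2) ^ 2) :=
      ((in2.const_mul (1/4)).add iu4).neg
    have hq14 : Integrable fun x => (1/4) * (n t x) ^ 2 := in2.const_mul (1/4)
    have := integral_mono hneg inu2
      (fun x => by
        show -((1/4) * (n t x) ^ 2 + ((u t x) ^ 2) ^ 2) ≤ n t x * (u t x) ^ 2
        nlinarith [sq_nonneg (n t x / 2 + (u t x) ^ 2)])
    rwa [integral_neg, integral_add hq14 iu4, integral_const_mul] at this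
  -- energy splitting
  have eEI : (∫ x : ℝ, EI u n v t x)
      = (∫ x : ℝ, (u t x) ^ 2) + (∫ x : ℝ, (pdR u t x) ^ 2)
        + (∫ x : ℝ, (pdtR u t x) ^ 2)
        + (1/2) * ((∫ x : ℝ, (n t x) ^ 2) + ∫ x : ℝ, (v t x) ^ 2)
        + ∫ x : ℝ, n t x * (u t x) ^ 2 := by
    have p1 : Integrable fun x => (u t x) ^ 2 + (pdR u t x) ^ 2 := iu2.add iux2
    have p2 : Integrable fun x => (u t x) ^ 2 + (pdR u t x) ^ 2 + (pdtR u t x) ^ 2 :=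
      p1.add iut2
    have phalf : Integrable fun x => (1/2) * ((n t x) ^ 2 + (v t x) ^ 2) :=
      (in2.add iv2).const_mul (1/2)
    have p3 : Integrable fun x => (u t x) ^ 2 + (pdR u t x) ^ 2 + (pdtR u t x) ^ 2
        + (1/2) * ((n t x) ^ 2 + (v t x) ^ 2) := p2.add phalf
    have e1 : (∫ x : ℝ, EI u n v t x)
        = (∫ x : ℝ, ((u t x) ^ 2 + (pdR u t x) ^ 2 + (pdtR u t x) ^ 2
            + (1/2) * ((n t x) ^ 2 + (v t x) ^ 2)))
          + ∫ x : ℝ, n t x * (u t x) ^ 2 := integral_add p3 inu2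
    rw [e1, integral_add p2 phalf, integral_add p1 iut2,
      integral_add iu2 iux2, integral_const_mul, integral_add in2 iv2]
  -- conclusion splitting
  have eConcl : (∫ x : ℝ, ((pdtR u t x) ^ 2 + (pdR u t x) ^ 2 + (u t x) ^ 2
        + (n t x) ^ 2 + (v t x) ^ 2))
      = (∫ x : ℝ, (pdtR u t x) ^ 2) + (∫ x : ℝ, (pdR u t x) ^ 2)
        + (∫ x : ℝ, (u t x) ^ 2) + (∫ x : ℝ, (n t x) ^ 2)
        + ∫ x : ℝ, (v t x) ^ 2 := by
    have q1 : Integrable fun x => (pdtR u t x) ^ 2 + (pdR u t x) ^ 2 := iut2.add iux2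
    have q2 : Integrable fun x => (pdtR u t x) ^ 2 + (pdR u t x) ^ 2 + (u t x) ^ 2 :=
      q1.add iu2
    have q3 : Integrable fun x => (pdtR u t x) ^ 2 + (pdR u t x) ^ 2 + (u t x) ^ 2
        + (n t x) ^ 2 := q2.add in2
    rw [integral_add q3 iv2, integral_add q2 in2, integral_add q1 iu2,
      integral_add iut2 iux2]
  constructor
  · rw [eConcl]; linarith [hKsplit, hK, hC2]
  · rw [eEI]; linarith [hQ, hR4, hA, hB, hCc]

end Solution3
end KGZaux

/-- uniform-in-time bound of the energy norm for solutions of the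
Klein–Gordon–Zakharov system with uniformly bounded `‖u‖_{H¹}` and `‖∂ₜu‖_{L²}`,
with a positive constant `K = F (E_KG(0)) ε C` depending only on the initial
energy and the bounds `ε`, `C`. -/
theorem kgz_energy_norm_bound :
    ∃ F : ℝ → ℝ → ℝ → ℝ, ∀ (u n v : ℝ → ℝ → ℝ) (ε C : ℝ),
      IsKGZSolution u n v → 0 < ε → 0 < C →
      (∀ t ≥ (0:ℝ), Real.sqrt (∫ x : ℝ, ((pdR u t x) ^ 2 + (u t x) ^ 2)) ≤ ε) →
      (∀ t ≥ (0:ℝ), Real.sqrt (∫ x : ℝ, (pdtR u t x) ^ 2) ≤ C) →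
      0 < F (∫ x : ℝ, ((u 0 x) ^ 2 + (pdR u 0 x) ^ 2 + (pdtR u 0 x) ^ 2
              + (1/2) * ((n 0 x) ^ 2 + (v 0 x) ^ 2) + n 0 x * (u 0 x) ^ 2)) ε C ∧
      ∀ t ≥ (0:ℝ),
        (∫ x : ℝ, ((pdtR u t x) ^ 2 + (pdR u t x) ^ 2 + (u t x) ^ 2
            + (n t x) ^ 2 + (v t x) ^ 2))
          ≤ F (∫ x : ℝ, ((u 0 x) ^ 2 + (pdR u 0 x) ^ 2 + (pdtR u 0 x) ^ 2
                + (1/2) * ((n 0 x) ^ 2 + (v 0 x) ^ 2) + n 0 x * (u 0 x) ^ 2)) ε C := by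
  refine ⟨fun a ε C => C ^ 2 + ε ^ 2 + 4 * a + 4 * ε ^ 4, ?_⟩
  intro u n v ε C hs hε hC hH1 hH2
  have hE0 : (∫ x : ℝ, ((u 0 x) ^ 2 + (pdR u 0 x) ^ 2 + (pdtR u 0 x) ^ 2
      + (1/2) * ((n 0 x) ^ 2 + (v 0 x) ^ 2) + n 0 x * (u 0 x) ^ 2))
      = ∫ x : ℝ, KGZaux.EI u n v 0 x := rfl
  have hM0 : 0 ≤ ∫ x : ℝ, (n 0 x) ^ 2 := integral_nonneg fun x => by positivity
  have hW0 : 0 ≤ ∫ x : ℝ, (v 0 x) ^ 2 := integral_nonneg fun x => by positivity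
  have h0 := (KGZaux.per_t hs 0 ε C (hH1 0 le_rfl) (hH2 0 le_rfl)).2
  constructor
  · simp only [hE0]
    have hε2 : 0 < ε ^ 2 := pow_pos hε 2
    have hC2 : 0 < C ^ 2 := pow_pos hC 2
    linarith [h0]
  · intro t ht
    have h1 := (KGZaux.per_t hs t ε C (hH1 t ht) (hH2 t ht)).1
    have h2 := (KGZaux.per_t hs t ε C (hH1 t ht) (hH2 t ht)).2
    have hcons := KGZaux.EI_const hs t
    simp only [hE0]
    linarith [h1, h2, hcons]
end
end
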